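/- arXiv:2504.04111 — 10 statements merged into one kernel-verified Lean document; each statement's English description precedes it below -/
import Mathlib

section
/- A subgroup C of an abelian group G is completely inert if and only if it is characteristically inert. -/
/-- `K` has finite index in `H` (i.e. the quotient `H/(K ⊓ H)` is finite). -/
def FiniteIndexIn {G : Type*} [AddCommGroup G] (K H : AddSubgroup G) : Prop :=
  K.relIndex H ≠ 0

/-- A subgroup `C` is completely inert: for every automorphism `ψ` of `G`,
`C ⊓ ψ(C)` has finite index in both `C` and `ψ(C)`. -/
def CompletelyInert {G : Type*} [AddCommGroup G] (C : AddSubgroup G) : Prop :=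
  ∀ ψ : G ≃+ G, (C ⊓ C.map (ψ : G →+ G)).relIndex C ≠ 0 ∧
    (C ⊓ C.map (ψ : G →+ G)).relIndex (C.map (ψ : G →+ G)) ≠ 0

/-- A subgroup `C` is characteristically inert: `(ψ(C)+C)/C` is finite for all automorphisms. -/
def CharInert {G : Type*} [AddCommGroup G] (C : AddSubgroup G) : Prop :=
  ∀ ψ : G ≃+ G, C.relIndex (C ⊔ C.map (ψ : G →+ G)) ≠ 0

def UnifCompletelyInert {G : Type*} [AddCommGroup G] (C : AddSubgroup G) : Prop :=
  ∃ n : ℕ, 0 < n ∧ ∀ ψ : G ≃+ G,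
    (0 < (C ⊓ C.map (ψ : G →+ G)).relIndex C ∧ (C ⊓ C.map (ψ : G →+ G)).relIndex C ≤ n) ∧
    (0 < (C ⊓ C.map (ψ : G →+ G)).relIndex (C.map (ψ : G →+ G)) ∧
      (C ⊓ C.map (ψ : G →+ G)).relIndex (C.map (ψ : G →+ G)) ≤ n)

def UnifCharInert {G : Type*} [AddCommGroup G] (C : AddSubgroup G) : Prop :=
  ∃ n : ℕ, 0 < n ∧ ∀ ψ : G ≃+ G,
    0 < C.relIndex (C ⊔ C.map (ψ : G →+ G)) ∧ C.relIndex (C ⊔ C.map (ψ : G →+ G)) ≤ n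

/-- Two subgroups are commensurable if their intersection has finite index in both. -/
def Commens {G : Type*} [AddCommGroup G] (H C : AddSubgroup G) : Prop :=
  (H ⊓ C).relIndex H ≠ 0 ∧ (H ⊓ C).relIndex C ≠ 0

def FullyInert {G : Type*} [AddCommGroup G] (H : AddSubgroup G) : Prop :=
  ∀ φ : G →+ G, H.relIndex (H ⊔ H.map φ) ≠ 0

def UnifFullyInert {G : Type*} [AddCommGroup G] (H : AddSubgroup G) : Prop :=
  ∃ n : ℕ, 0 < n ∧ ∀ φ : G →+ G,
    0 < H.relIndex (H ⊔ H.map φ) ∧ H.relIndex (H ⊔ H.map φ) ≤ n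

def FullyInvariant {G : Type*} [AddCommGroup G] (F : AddSubgroup G) : Prop :=
  ∀ φ : G →+ G, F.map φ ≤ F

def CharacteristicSub {G : Type*} [AddCommGroup G] (F : AddSubgroup G) : Prop :=
  ∀ ψ : G ≃+ G, F.map (ψ : G →+ G) ≤ F

def EssentialIn {G : Type*} [AddCommGroup G] (H : AddSubgroup G) : Prop :=
  ∀ A : AddSubgroup G, A ≠ ⊥ → H ⊓ A ≠ ⊥

theorem completelyInert_iff_charInert {G : Type*} [AddCommGroup G] (C : AddSubgroup G) :
    CompletelyInert C ↔ CharInert C := by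
  constructor
  · intro h ψ
    rw [AddSubgroup.relIndex_sup_left, ← AddSubgroup.inf_relIndex_right]
    exact (h ψ).2
  · intro h ψ
    constructor
    · have h1 := h ψ.symm
      rw [AddSubgroup.relIndex_sup_left] at h1
      have e : C.map (ψ : G →+ G) = C.comap (ψ.symm : G →+ G) := by
        ext x
        simp only [AddSubgroup.mem_map, AddSubgroup.mem_comap]
        constructor
        · rintro ⟨y, hy, rfl⟩; simpa using hy
        · intro hx; exact ⟨ψ.symm x, hx, by simp⟩
      rw [inf_comm, AddSubgroup.inf_relIndex_right, e, AddSubgroup.relIndex_comap]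
      exact h1
    · have h1 := h ψ
      rw [AddSubgroup.relIndex_sup_left, ← AddSubgroup.inf_relIndex_right] at h1
      exact h1
end

section
/- A subgroup U of an abelian group G is uniformly completely inert if and only if it is uniformly characteristically inert. -/
theorem relindex_map_eq {G : Type*} [AddCommGroup G] (A B : AddSubgroup G) (e : G ≃+ G) :
    (A.map (e : G →+ G)).relIndex (B.map (e : G →+ G)) = A.relIndex B := by
  rw [AddSubgroup.map_equiv_eq_comap_symm, AddSubgroup.relIndex_comap, AddSubgroup.map_map]
  congr 1
  ext x
  simp

theorem key1 {G : Type*} [AddCommGroup G] (U : AddSubgroup G) (ψ : G ≃+ G) :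
    (U ⊓ U.map (ψ : G →+ G)).relIndex (U.map (ψ : G →+ G)) =
      U.relIndex (U ⊔ U.map (ψ : G →+ G)) := by
  rw [AddSubgroup.inf_relIndex_right, AddSubgroup.relIndex_sup_left]

theorem key2 {G : Type*} [AddCommGroup G] (U : AddSubgroup G) (ψ : G ≃+ G) :
    (U ⊓ U.map (ψ : G →+ G)).relIndex U =
      U.relIndex (U ⊔ U.map (ψ.symm : G →+ G)) := by
  have h := relindex_map_eq (U ⊓ U.map (ψ : G →+ G)) U ψ.symm
  rw [← h, AddSubgroup.map_inf _ _ _ ψ.symm.injective, AddSubgroup.map_map]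
  have : (U.map (ψ : G →+ G)).map (ψ.symm : G →+ G) = U := by
    rw [AddSubgroup.map_map]; convert AddSubgroup.map_id U using 2; ext x; simp
  rw [show ((ψ.symm : G →+ G).comp (ψ : G →+ G)) = AddMonoidHom.id G by ext x; simp,
    AddSubgroup.map_id] at *
  rw [inf_comm]
  exact key1 U ψ.symm

theorem unifCompletelyInert_iff_unifCharInert {G : Type*} [AddCommGroup G] (U : AddSubgroup G) :
    UnifCompletelyInert U ↔ UnifCharInert U := by
  constructor
  · rintro ⟨n, hn, h⟩
    exact ⟨n, hn, fun ψ => by rw [← key1 U ψ]; exact (h ψ).2⟩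
  · rintro ⟨n, hn, h⟩
    refine ⟨n, hn, fun ψ => ⟨?_, ?_⟩⟩
    · rw [key2 U ψ]; exact h ψ.symm
    · rw [key1 U ψ]; exact h ψ
end

section
/- If C is a uniformly characteristically inert subgroup of an abelian group G and H is a subgroup commensurable with C, then H is uniformly characteristically inert in G. -/
lemma my_relindex_map_equiv {G : Type*} [AddCommGroup G] (ψ : G ≃+ G) (K H : AddSubgroup G) :
    (K.map (ψ : G →+ G)).relIndex (H.map (ψ : G →+ G)) = K.relIndex H := by
  rw [AddSubgroup.map_equiv_eq_comap_symm ψ K, AddSubgroup.relIndex_comap]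
  congr 1
  rw [AddSubgroup.map_map]
  convert AddSubgroup.map_id H using 2
  ext x; simp

private theorem aux_main {G : Type*} [AddCommGroup G] (C H : AddSubgroup G)
    (hC : ∃ n : ℕ, 0 < n ∧ ∀ ψ : G ≃+ G,
      0 < C.relIndex (C ⊔ C.map (ψ : G →+ G)) ∧ C.relIndex (C ⊔ C.map (ψ : G →+ G)) ≤ n)
    (hHC : (H ⊓ C).relIndex H ≠ 0 ∧ (H ⊓ C).relIndex C ≠ 0) :
    ∃ n : ℕ, 0 < n ∧ ∀ ψ : G ≃+ G,
      0 < H.relIndex (H ⊔ H.map (ψ : G →+ G)) ∧ H.relIndex (H ⊔ H.map (ψ : G →+ G)) ≤ n := by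
  obtain ⟨n, hn, hCn⟩ := hC
  obtain ⟨h1, h2⟩ := hHC
  set K := H ⊓ C with hK
  set m1 := K.relIndex H with hm1
  set m2 := K.relIndex C with hm2
  refine ⟨m2 * (n * (m1 * m1)) * m1, by positivity, fun ψ => ?_⟩
  set ψ' := (ψ : G →+ G)
  set A := C ⊔ C.map ψ' with hA
  set M := A ⊔ H ⊔ H.map ψ' with hM
  -- Step A : A.relIndex (A ⊔ H) ≤ m1 and ≠ 0
  have hKA : K ≤ A := le_trans inf_le_right le_sup_left
  have dA : A.relIndex (A ⊔ H) ∣ m1 := by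
    rw [sup_comm, AddSubgroup.relIndex_sup_right]
    exact AddSubgroup.relIndex_dvd_of_le_left H hKA
  -- Step B : (A ⊔ H).relIndex M ∣ m1
  have hKψ : K.map ψ' ≤ A ⊔ H :=
    le_trans (AddSubgroup.map_mono inf_le_right) (le_trans le_sup_right le_sup_left)
  have dB : (A ⊔ H).relIndex M ∣ m1 := by
    rw [hM, AddSubgroup.relIndex_sup_left]
    have h := AddSubgroup.relIndex_dvd_of_le_left (AddSubgroup.map ψ' H) hKψ
    rwa [my_relindex_map_equiv ψ K H] at h
  -- combine: A.relIndex M ≤ m1 * m1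
  have eAM : A.relIndex (A ⊔ H) * (A ⊔ H).relIndex M = A.relIndex M :=
    AddSubgroup.relIndex_mul_relIndex _ _ _ le_sup_left (le_sup_left)
  have hm1pos : m1 ≠ 0 := h1
  have hAle : A.relIndex M ≤ m1 * m1 := by
    rw [← eAM]
    exact Nat.mul_le_mul (Nat.le_of_dvd (Nat.pos_of_ne_zero hm1pos) dA)
      (Nat.le_of_dvd (Nat.pos_of_ne_zero hm1pos) dB)
  -- Step C : C.relIndex M ≤ n * (m1 * m1)
  have hCA := hCn ψ
  have eCM : C.relIndex A * A.relIndex M = C.relIndex M :=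
    AddSubgroup.relIndex_mul_relIndex _ _ _ le_sup_left (le_trans le_sup_left le_sup_left)
  have hCle : C.relIndex M ≤ n * (m1 * m1) := by
    rw [← eCM]; exact Nat.mul_le_mul hCA.2 hAle
  -- Step D : K.relIndex M ≤ m2 * (n * (m1 * m1))
  have eKM : K.relIndex C * C.relIndex M = K.relIndex M :=
    AddSubgroup.relIndex_mul_relIndex _ _ _ inf_le_right
      (le_trans le_sup_left (le_trans le_sup_left le_sup_left))
  have hKle : K.relIndex M ≤ m2 * (n * (m1 * m1)) := by
    rw [← eKM]; exact Nat.mul_le_mul (le_refl m2) hCle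
  -- K.relIndex M ≠ 0
  have hKne : K.relIndex M ≠ 0 := by
    rw [← eKM, ← eCM, ← eAM]
    refine Nat.mul_ne_zero h2 (Nat.mul_ne_zero hCA.1.ne'
      (Nat.mul_ne_zero ?_ ?_))
    · intro h0; exact hm1pos (Nat.eq_zero_of_zero_dvd (h0 ▸ dA))
    · intro h0; exact hm1pos (Nat.eq_zero_of_zero_dvd (h0 ▸ dB))
  -- Step E : H.relIndex M ∣ K.relIndex M
  have dE : H.relIndex M ∣ K.relIndex M := AddSubgroup.relIndex_dvd_of_le_left M inf_le_left
  -- Step F : H.relIndex (H ⊔ H.map ψ') ∣ H.relIndex M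
  have hHsub : H ⊔ H.map ψ' ≤ M := sup_le (le_trans le_sup_right le_sup_left) le_sup_right
  have eF : H.relIndex (H ⊔ H.map ψ') * (H ⊔ H.map ψ').relIndex M = H.relIndex M :=
    AddSubgroup.relIndex_mul_relIndex _ _ _ le_sup_left hHsub
  have dF : H.relIndex (H ⊔ H.map ψ') ∣ K.relIndex M := dvd_trans ⟨_, eF.symm⟩ dE
  constructor
  · exact Nat.pos_of_ne_zero fun h0 => hKne (Nat.eq_zero_of_zero_dvd (h0 ▸ dF))
  · calc H.relIndex (H ⊔ H.map ψ') ≤ K.relIndex M := Nat.le_of_dvd (Nat.pos_of_ne_zero hKne) dF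
      _ ≤ m2 * (n * (m1 * m1)) := hKle
      _ ≤ m2 * (n * (m1 * m1)) * m1 := Nat.le_mul_of_pos_right _ (Nat.pos_of_ne_zero hm1pos)


theorem unifCharInert_of_commens {G : Type*} [AddCommGroup G] (C H : AddSubgroup G)
    (hC : UnifCharInert C) (hHC : Commens H C) : UnifCharInert H := aux_main C H hC hHC
end

section
/- A subgroup of an abelian group that is commensurable with a completely inert subgroup is itself completely inert. -/
theorem map_relindex_equiv {G : Type*} [AddCommGroup G] (A B : AddSubgroup G) (ψ : G ≃+ G) :
    (A.map (ψ : G →+ G)).relIndex (B.map (ψ : G →+ G)) = A.relIndex B := by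
  rw [show A.map (ψ : G →+ G) = A.comap (ψ.symm : G →+ G) by
        ext x
        simp only [AddSubgroup.mem_map, AddSubgroup.mem_comap, AddMonoidHom.coe_coe]
        constructor
        · rintro ⟨y, hy, rfl⟩; simpa
        · intro h; exact ⟨ψ.symm x, h, by simp⟩
      , AddSubgroup.relIndex_comap]
  congr 1
  ext x
  simp only [AddSubgroup.mem_map, AddMonoidHom.coe_coe]
  constructor
  · rintro ⟨y, ⟨z, hz, rfl⟩, rfl⟩; simpa
  · intro h; exact ⟨ψ x, ⟨x, h, rfl⟩, by simp⟩

theorem completelyInert_of_commens {G : Type*} [AddCommGroup G] (C H : AddSubgroup G)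
    (hC : CompletelyInert C) (hHC : Commens H C) : CompletelyInert H := by
  intro ψ
  obtain ⟨hCψ, hψC⟩ := hC ψ
  obtain ⟨hHC1, hHC2⟩ := hHC
  rw [AddSubgroup.inf_relIndex_left] at hHC1
  rw [AddSubgroup.inf_relIndex_right] at hHC2
  rw [AddSubgroup.inf_relIndex_left] at hCψ
  rw [AddSubgroup.inf_relIndex_right] at hψC
  -- hHC1 : C.relIndex H ≠ 0, hHC2 : H.relIndex C ≠ 0
  -- hCψ : (C.map ψ).relIndex C ≠ 0, hψC : C.relIndex (C.map ψ) ≠ 0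
  have hψHC : (H.map (ψ : G →+ G)).relIndex (C.map (ψ : G →+ G)) ≠ 0 := by
    rwa [map_relindex_equiv]
  have hψCH : (C.map (ψ : G →+ G)).relIndex (H.map (ψ : G →+ G)) ≠ 0 := by
    rwa [map_relindex_equiv]
  constructor
  · rw [AddSubgroup.inf_relIndex_left]
    exact AddSubgroup.relIndex_ne_zero_trans
      (AddSubgroup.relIndex_ne_zero_trans hψHC hCψ) hHC1
  · rw [AddSubgroup.inf_relIndex_right]
    exact AddSubgroup.relIndex_ne_zero_trans
      (AddSubgroup.relIndex_ne_zero_trans hHC2 hψC) hψCH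
end

section
/- If every subgroup of an abelian group G = A ⊕ B is completely inert, then f(B) is finite for every homomorphism f: B → A. -/
theorem hom_image_finite_of_all_completelyInert' {G : Type*} [AddCommGroup G]
    (A B : AddSubgroup G) (hcompl : IsCompl A B)
    (h : ∀ ψ : G ≃+ G, (B ⊓ B.map (ψ : G →+ G)).relIndex B ≠ 0) :
    ∀ f : ↥B →+ ↥A, Finite f.range := by
  intro f
  have hc' : IsCompl (AddSubgroup.toIntSubmodule A) (AddSubgroup.toIntSubmodule B) :=
    AddSubgroup.toIntSubmodule.isCompl hcompl
  set π : G →ₗ[ℤ] (AddSubgroup.toIntSubmodule B) :=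
    Submodule.linearProjOfIsCompl _ _ hc'.symm with hπ
  have hmem : ∀ g : G, ((π g : G)) ∈ B := fun g => (π g).2
  let φ : G →+ G :=
  { toFun := fun g => (f ⟨(π g : G), hmem g⟩ : G)
    map_zero' := by
      have h0 : π (0 : G) = 0 := map_zero π
      have h1 : (⟨(π (0:G) : G), hmem 0⟩ : ↥B) = 0 := by ext; simp [h0]
      show ((f ⟨(π (0:G) : G), hmem 0⟩ : ↥A) : G) = 0
      rw [h1, map_zero]; rfl
    map_add' := fun x y => by
      have hxy : π (x + y) = π x + π y := map_add π x y
      have h2 : (⟨(π (x+y) : G), hmem _⟩ : ↥B) = ⟨π x, hmem x⟩ + ⟨π y, hmem y⟩ := by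
        ext; simp [hxy]
      show ((f ⟨(π (x+y) : G), hmem _⟩ : ↥A) : G) =
        ((f ⟨(π x : G), hmem x⟩ : ↥A) : G) + ((f ⟨(π y : G), hmem y⟩ : ↥A) : G)
      rw [h2, map_add]; rfl }
  have hφA : ∀ g : G, φ g ∈ A := fun g => (f _).2
  have hπA : ∀ a : G, a ∈ A → π a = 0 := fun a ha =>
    Submodule.linearProjOfIsCompl_apply_right' hc'.symm (x := a)
      ha
  have hφφ : ∀ g : G, φ (φ g) = 0 := by
    intro g
    have h0 : π (φ g) = 0 := hπA _ (hφA g)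
    show ((f ⟨(π (φ g) : G), hmem _⟩ : ↥A) : G) = 0
    have : (⟨(π (φ g) : G), hmem _⟩ : ↥B) = 0 := by ext; simp [h0]
    rw [this, map_zero]; rfl
  have hπB : ∀ b : G, (hb : b ∈ B) → (π b : G) = b := by
    intro b hb
    have := Submodule.linearProjOfIsCompl_apply_left hc'.symm
      (⟨b, hb⟩ : AddSubgroup.toIntSubmodule B)
    exact congrArg Subtype.val this
  let ψ : G ≃+ G :=
  { toFun := fun g => g + φ g
    invFun := fun g => g - φ g
    left_inv := fun g => by simp [map_add, hφφ g]
    right_inv := fun g => by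
      simp only [map_sub, hφφ g, sub_zero]
      abel
    map_add' := fun x y => by simp [map_add]; abel }
  have hk := h ψ
  have hle : (B ⊓ B.map (ψ : G →+ G)).addSubgroupOf B ≤ f.ker := by
    rintro ⟨b, hb⟩ hbK
    rw [AddSubgroup.mem_addSubgroupOf] at hbK
    obtain ⟨hbB, x, hxB, hx⟩ := hbK
    have hψx : x + φ x = b := hx
    have hφx : φ x = (f ⟨x, hxB⟩ : G) := by
      show ((f ⟨(π x : G), hmem x⟩ : ↥A) : G) = _
      congr 2
      exact Subtype.ext (hπB x hxB)
    have hmemA : φ x ∈ A := hφA x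
    have hmemB : φ x ∈ B := by
      have : φ x = b - x := by rw [← hψx]; abel
      rw [this]; exact sub_mem hbB hxB
    have hzero : φ x = 0 := by
      have := hcompl.inf_eq_bot
      have hmem2 : φ x ∈ A ⊓ B := ⟨hmemA, hmemB⟩
      rw [this, AddSubgroup.mem_bot] at hmem2
      exact hmem2
    have hbx : b = x := by rw [← hψx, hzero, add_zero]
    have hf0 : f ⟨x, hxB⟩ = 0 := by
      rw [hφx] at hzero
      exact Subtype.ext hzero
    rw [AddMonoidHom.mem_ker]
    have : (⟨b, hb⟩ : ↥B) = ⟨x, hxB⟩ := Subtype.ext hbx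
    rw [this, hf0]
  have hker : f.ker.index ≠ 0 := by
    intro h0
    have hdvd := AddSubgroup.index_dvd_of_le hle
    rw [h0] at hdvd
    exact hk (Nat.eq_zero_of_zero_dvd hdvd)
  have : Finite (↥B ⧸ f.ker) := by
    have : Nat.card (↥B ⧸ f.ker) ≠ 0 := hker
    exact Nat.finite_of_card_ne_zero this
  exact Finite.of_equiv _ (QuotientAddGroup.quotientKerEquivRange f).toEquiv

theorem hom_image_finite_of_all_completelyInert {G : Type*} [AddCommGroup G]
    (A B : AddSubgroup G) (hcompl : IsCompl A B)
    (h : ∀ C : AddSubgroup G, CompletelyInert C) :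
    ∀ f : ↥B →+ ↥A, Finite f.range :=
  hom_image_finite_of_all_completelyInert' A B hcompl (fun ψ => (h B ψ).1)
end

section
/- If G is a torsion-free abelian group in which every subgroup is completely inert, then G is indecomposable (G cannot be written as a direct sum of two nonzero subgroups). -/
section
variable {G : Type*} [AddCommGroup G]

private lemma zsmul_ne_zero (htf : ∀ g : G, g ≠ 0 → ∀ n : ℕ, n ≠ 0 → n • g ≠ 0)
    {g : G} (hg : g ≠ 0) {k : ℤ} (hk : k ≠ 0) : k • g ≠ 0 := by
  intro h0
  have hna : (k.natAbs : ℕ) ≠ 0 := by simpa using hk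
  apply htf g hg k.natAbs hna
  rcases Int.natAbs_eq k with he | he
  · rw [← natCast_zsmul, ← he, h0]
  · rw [← natCast_zsmul]
    have : (k.natAbs : ℤ) = -k := by omega
    rw [this, neg_zsmul, h0, neg_zero]

end

theorem indecomposable_of_all_completelyInert {G : Type*} [AddCommGroup G]
    (htf : ∀ g : G, g ≠ 0 → ∀ n : ℕ, n ≠ 0 → n • g ≠ 0)
    (h : ∀ C : AddSubgroup G, CompletelyInert C) :
    ∀ A B : AddSubgroup G, IsCompl A B → A = ⊥ ∨ B = ⊥ := by
  intro A B hAB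
  by_contra hcon
  push_neg at hcon
  obtain ⟨hA, hB⟩ := hcon
  obtain ⟨a, haA, ha⟩ : ∃ a ∈ A, a ≠ 0 := by
    by_contra hc; push_neg at hc
    exact hA ((AddSubgroup.eq_bot_iff_forall _).mpr hc)
  obtain ⟨b, hbB, hb⟩ : ∃ b ∈ B, b ≠ 0 := by
    by_contra hc; push_neg at hc
    exact hB ((AddSubgroup.eq_bot_iff_forall _).mpr hc)
  -- submodule versions
  set pA := AddSubgroup.toIntSubmodule A with hpA
  set pB := AddSubgroup.toIntSubmodule B with hpB
  have hc : IsCompl pA pB :=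
    (AddSubgroup.toIntSubmodule : AddSubgroup G ≃o Submodule ℤ G).isCompl hAB
  set e := Submodule.prodEquivOfIsCompl pA pB hc with he
  set m : (pA × pB) ≃ₗ[ℤ] (pA × pB) :=
    (LinearEquiv.refl ℤ pA).prodCongr (LinearEquiv.neg ℤ) with hm
  set ψl : G ≃ₗ[ℤ] G := (e.symm.trans m).trans e with hψl
  set ψ : G ≃+ G := ψl.toAddEquiv with hψ
  have hψA : ∀ x ∈ A, ψ x = x := by
    intro x hx
    have : e.symm x = (⟨x, hx⟩, 0) := Submodule.prodEquivOfIsCompl_symm_apply_left pA pB hc ⟨x, hx⟩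
    show e (m (e.symm x)) = x
    rw [this]
    have hm0 : m (⟨x, hx⟩, 0) = (⟨x, hx⟩, 0) := by
      simp [hm]
    rw [hm0, ← this, e.apply_symm_apply]
  have hψB : ∀ x ∈ B, ψ x = -x := by
    intro x hx
    have hsx : e.symm x = (0, ⟨x, hx⟩) := Submodule.prodEquivOfIsCompl_symm_apply_right pA pB hc ⟨x, hx⟩
    show e (m (e.symm x)) = -x
    rw [hsx]
    have hm0 : m ((0 : pA), (⟨x, hx⟩ : pB)) = -(0, ⟨x, hx⟩) := by
      simp [hm, Prod.ext_iff]
    rw [hm0, map_neg, ← hsx, e.apply_symm_apply]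
  -- the cyclic subgroup
  have hab : a + b ≠ 0 := by
    intro h0
    have h1 : a = -b := eq_neg_of_add_eq_zero_left h0
    have : a ∈ B := h1 ▸ B.neg_mem hbB
    exact ha (by simpa using hAB.disjoint.le_bot ⟨haA, this⟩)
  set C := AddSubgroup.zmultiples (a + b) with hC
  have hψab : ψ (a + b) = a - b := by
    rw [map_add, hψA a haA, hψB b hbB, sub_eq_add_neg]
  -- C ⊓ ψ C = ⊥
  have hdisj : C ⊓ C.map (ψ : G →+ G) = ⊥ := by
    rw [eq_bot_iff]
    rintro x ⟨hx1, hx2⟩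
    obtain ⟨n, hn⟩ := AddSubgroup.mem_zmultiples_iff.mp hx1
    obtain ⟨y, hy, hyx⟩ := hx2
    obtain ⟨k, hk⟩ := AddSubgroup.mem_zmultiples_iff.mp hy
    have hyx' : ψ y = x := hyx
    rw [← hk, map_zsmul, hψab] at hyx'
    -- n • (a+b) = x = k • (a - b)
    have key : (n - k) • a = -((n + k) • b) := by
      have : n • (a + b) = k • (a - b) := by rw [hn, ← hyx']
      have h2 : n • a + n • b = k • a - k • b := by
        rw [← smul_add, ← smul_sub]; exact this
      rw [sub_smul, add_smul]
      abel_nf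
      abel_nf at h2
      linear_combination (norm := abel_nf) h2
    have hmemA : (n - k) • a ∈ A := A.zsmul_mem haA _
    have hmemB : (n - k) • a ∈ B := by rw [key]; exact B.neg_mem (B.zsmul_mem hbB _)
    have hz : (n - k) • a = 0 := by
      have := hAB.disjoint.le_bot ⟨hmemA, hmemB⟩
      simpa using this
    have hnk : n = k := by
      by_contra hne
      exact zsmul_ne_zero htf ha (sub_ne_zero.mpr hne) hz
    have hz2 : (n + k) • b = 0 := by
      rw [key] at hz; simpa using hz
    have hnk2 : n = -k := by
      by_contra hne
      refine zsmul_ne_zero htf hb ?_ hz2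
      omega
    have hn0 : n = 0 := by omega
    simp [← hn, hn0]
  -- C is infinite
  have hCinf : Infinite C := by
    refine Infinite.of_injective (fun n : ℤ => (⟨n • (a + b), AddSubgroup.mem_zmultiples_iff.mpr ⟨n, rfl⟩⟩ : C)) ?_
    intro m n hmn
    by_contra hne
    have : (m - n) • (a + b) = 0 := by
      rw [sub_smul, sub_eq_zero]
      exact congrArg Subtype.val hmn
    exact zsmul_ne_zero htf hab (sub_ne_zero.mpr hne) this
  have := (h C ψ).1
  rw [hdisj, AddSubgroup.relIndex_bot_left] at this
  exact this (Nat.card_eq_zero_of_infinite)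
end

section
/- If G is an infinite reduced abelian p-group, then G has a subgroup that is not completely inert. Equivalently, if every subgroup of a reduced abelian p-group G is completely inert, then G is finite. -/
/-- A subgroup `D` is divisible (as a group). -/
def DivisibleSub {G : Type*} [AddCommGroup G] (D : AddSubgroup G) : Prop :=
  ∀ n : ℕ, n ≠ 0 → ∀ d ∈ D, ∃ e ∈ D, n • e = d


open AddSubgroup Pointwise

namespace CIproof

variable {G : Type*} [AddCommGroup G]

/-- scalar multiplication by an integer as an `AddMonoidHom`. -/
def sHom (c : ℤ) : G →+ G := AddMonoidHom.mk' (fun x => c • x) (fun a b => smul_add c a b)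

@[simp] lemma sHom_apply (c : ℤ) (x : G) : sHom c x = c • x := rfl

/-- the subgroup of `p^k`-th multiples of elements of `K`. -/
def pk (p : ℕ) (k : ℕ) (K : AddSubgroup G) : AddSubgroup G := K.map (sHom ((p : ℤ) ^ k))

lemma mem_pk {p k : ℕ} {K : AddSubgroup G} {x : G} :
    x ∈ pk p k K ↔ ∃ y ∈ K, ((p : ℤ) ^ k) • y = x := by
  simp [pk, AddSubgroup.mem_map]

lemma pk_le {p k : ℕ} {K : AddSubgroup G} : pk p k K ≤ K := by
  rintro x hx
  rcases mem_pk.1 hx with ⟨y, hy, rfl⟩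
  exact zsmul_mem hy _

lemma zsmul_mem_pk {p k : ℕ} {K : AddSubgroup G} {x : G} (hx : x ∈ pk p k K) (c : ℤ) :
    c • x ∈ pk p k K := zsmul_mem hx c

/-- order divides `∣` zsmul. -/
lemma ord_zsmul {a : G} {c : ℤ} (h : (addOrderOf a : ℤ) ∣ c) : c • a = 0 :=
  addOrderOf_dvd_iff_zsmul_eq_zero.1 h

lemma zsmul_ord {a : G} {c : ℤ} (h : c • a = 0) : (addOrderOf a : ℤ) ∣ c :=
  addOrderOf_dvd_iff_zsmul_eq_zero.2 h

variable (p : ℕ)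

/-- In a reduced `p`-group, a nonzero subgroup contains an element of order `p`
with an exact finite height. -/
lemma exists_socle (hp : p.Prime) (hpG : ∀ g : G, ∃ n : ℕ, ((p : ℤ) ^ n) • g = 0)
    (hred : ∀ D : AddSubgroup G, DivisibleSub D → D = ⊥)
    (K : AddSubgroup G) (hK : K ≠ ⊥) :
    ∃ a ∈ K, a ≠ 0 ∧ (p : ℤ) • a = 0 ∧ ∃ h : ℕ, a ∈ pk p h K ∧ a ∉ pk p (h+1) K := by
  by_contra hcon
  push_neg at hcon
  -- every socle element has all heights
  have allh : ∀ a ∈ K, (p : ℤ) • a = 0 → ∀ h : ℕ, a ∈ pk p h K := by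
    intro a haK hpa h
    rcases eq_or_ne a 0 with rfl | ha0
    · exact zero_mem _
    induction h with
    | zero => exact mem_pk.2 ⟨a, haK, by simp⟩
    | succ n ih => exact hcon a haK ha0 hpa n ih
  -- K is p-divisible
  have pdiv : ∀ n : ℕ, ∀ g ∈ K, ((p : ℤ) ^ n) • g = 0 → ∃ y ∈ K, (p : ℤ) • y = g := by
    intro n
    induction n with
    | zero =>
      intro g hg h0
      simp only [pow_zero, one_smul] at h0
      exact ⟨0, zero_mem _, by simp [h0]⟩
    | succ n ih =>
      intro g hg h0
      by_cases hgn : ((p : ℤ) ^ n) • g = 0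
      · exact ih g hg hgn
      · set a := ((p : ℤ) ^ n) • g with ha
        have haK : a ∈ K := zsmul_mem hg _
        have hpa : (p : ℤ) • a = 0 := by
          rw [ha, smul_smul, ← pow_succ']; exact h0
        have : a ∈ pk p (n+1) K := allh a haK hpa (n+1)
        rcases mem_pk.1 this with ⟨y, hyK, hy⟩
        have h2 : ((p : ℤ) ^ n) • (g - (p : ℤ) • y) = 0 := by
          rw [smul_sub, smul_smul, ← pow_succ, hy, ← ha, sub_self]
        rcases ih (g - (p : ℤ) • y) (sub_mem hg (zsmul_mem hyK _)) h2 with ⟨z, hzK, hz⟩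
        exact ⟨y + z, add_mem hyK hzK, by rw [smul_add, hz, add_sub_cancel]⟩
  have pdiv1 : ∀ g ∈ K, ∃ y ∈ K, (p : ℤ) • y = g := by
    intro g hg
    rcases hpG g with ⟨n, hn⟩
    exact pdiv n g hg hn
  -- iterate
  have pdivk : ∀ a : ℕ, ∀ g ∈ K, ∃ y ∈ K, ((p : ℤ) ^ a) • y = g := by
    intro a
    induction a with
    | zero => intro g hg; exact ⟨g, hg, by simp⟩
    | succ a ih =>
      intro g hg
      rcases pdiv1 g hg with ⟨y, hyK, hy⟩
      rcases ih y hyK with ⟨z, hzK, hz⟩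
      exact ⟨z, hzK, by rw [pow_succ', mul_smul, hz, hy]⟩
  -- K divisible
  have : DivisibleSub K := by
    intro n hn d hd
    set a := n.factorization p with hadef
    set m := n / p ^ a with hmdef
    have hnm : p ^ a * m = n := Nat.ordProj_mul_ordCompl_eq_self n p
    have hcop : Nat.Coprime p m := Nat.coprime_ordCompl hp hn
    rcases pdivk a d hd with ⟨e₁, he₁K, he₁⟩
    rcases hpG e₁ with ⟨s, hs⟩
    have hcop2 : IsCoprime (m : ℤ) ((p : ℤ) ^ s) := by
      have : Nat.Coprime m (p ^ s) := (Nat.Coprime.pow_right s hcop.symm)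
      exact_mod_cast Nat.isCoprime_iff_coprime.2 this
    rcases hcop2 with ⟨u, v, huv⟩
    refine ⟨u • e₁, zsmul_mem he₁K u, ?_⟩
    have : (n : ℤ) • (u • e₁) = d := by
      rw [smul_smul]
      have h1 : (n : ℤ) * u = (p : ℤ) ^ a * (m * u) := by
        rw [← hnm]; push_cast; ring
      rw [h1, mul_smul]
      have h2 : ((m : ℤ) * u) • e₁ = e₁ := by
        have : (m : ℤ) * u = 1 - v * (p : ℤ) ^ s := by linarith [huv]
        rw [this, sub_smul, one_smul, mul_smul, hs, smul_zero, sub_zero]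
      rw [h2, he₁]
    rw [← this, natCast_zsmul]
  have := hred K this
  exact hK this


lemma zmultiples_le' {a : G} {K : AddSubgroup G} (h : a ∈ K) : zmultiples a ≤ K := by
  rintro x hx
  rcases mem_zmultiples_iff.1 hx with ⟨c, rfl⟩
  exact zsmul_mem h c

lemma int_coprime_of_prime_not_dvd (hp : p.Prime) {c : ℤ} (h : ¬ (p : ℤ) ∣ c) :
    IsCoprime c (p : ℤ) := by
  rw [Int.isCoprime_iff_gcd_eq_one]
  have h2 : Int.gcd c (p : ℤ) ∣ p := by
    have := Int.gcd_dvd_right (a := c) (b := (p:ℤ))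
    exact_mod_cast this
  rcases (Nat.dvd_prime hp).1 h2 with h1 | h1
  · exact h1
  · exfalso
    apply h
    have h3 := Int.gcd_dvd_left (a := c) (b := (p : ℤ))
    rw [h1] at h3
    exact_mod_cast h3

/-- Zorn complement lemma: a "pure homogeneous" subgroup is a direct summand. -/
lemma zorn_compl (hp : p.Prime) (hpG : ∀ g : G, ∃ n : ℕ, ((p : ℤ) ^ n) • g = 0)
    (n : ℕ) (hn : 1 ≤ n) (K B : AddSubgroup G) (hBK : B ≤ K)
    (hhom : ∀ x ∈ B, ((p : ℤ) ^ (n - 1)) • x = 0 → ∃ y ∈ B, (p : ℤ) • y = x)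
    (hBq : ∀ x ∈ B, x ∈ pk p n K → x = 0) :
    ∃ H, H ≤ K ∧ B ⊓ H = ⊥ ∧ B ⊔ H = K := by
  set S : Set (AddSubgroup G) := {H | H ≤ K ∧ B ⊓ H = ⊥ ∧ pk p n K ≤ H} with hS
  have hpkS : pk p n K ∈ S := by
    refine ⟨pk_le, ?_, le_rfl⟩
    rw [eq_bot_iff]
    intro x hx
    rw [AddSubgroup.mem_bot]
    exact hBq x hx.1 hx.2
  have hzorn := zorn_le_nonempty₀ S ?hchain (pk p n K) hpkS
  case hchain =>
    intro c hcS hchain y hyc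
    haveI : Nonempty c := ⟨⟨y, hyc⟩⟩
    have hdir : Directed (· ≤ ·) (fun H : c => (H : AddSubgroup G)) := by
      intro a b
      rcases hchain.total a.2 b.2 with hab | hab
      · exact ⟨b, hab, le_rfl⟩
      · exact ⟨a, le_rfl, hab⟩
    refine ⟨⨆ H : c, (H : AddSubgroup G), ?_, fun z hz => le_iSup (fun H : c => (H : AddSubgroup G)) ⟨z, hz⟩⟩
    refine ⟨?_, ?_, ?_⟩
    · rw [iSup_le_iff]; exact fun H => (hcS H.2).1
    · rw [eq_bot_iff]
      intro x hx
      rcases (AddSubgroup.mem_iSup_of_directed hdir).1 hx.2 with ⟨H, hH⟩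
      have := (hcS H.2).2.1
      rw [AddSubgroup.mem_bot]
      have : x ∈ B ⊓ (H : AddSubgroup G) := ⟨hx.1, hH⟩
      rw [(hcS H.2).2.1] at this
      exact this
    · exact le_trans ((hcS hyc).2.2) (le_iSup (fun H : c => (H : AddSubgroup G)) ⟨y, hyc⟩)
  rcases hzorn with ⟨H, hle, hmax⟩
  have hHS : H ∈ S := hmax.1
  refine ⟨H, hHS.1, hHS.2.1, ?_⟩
  have hBHle : B ⊔ H ≤ K := sup_le hBK hHS.1
  refine le_antisymm hBHle ?_
  by_contra hKle
  rcases SetLike.not_le_iff_exists.1 hKle with ⟨g, hgK, hg⟩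
  -- minimal j with p^j g ∈ B ⊔ H
  have hex : ∃ j : ℕ, ((p : ℤ) ^ j) • g ∈ B ⊔ H := by
    rcases hpG g with ⟨m, hm⟩
    exact ⟨m, by rw [hm]; exact zero_mem _⟩
  classical
  set j₀ := Nat.find hex with hj₀
  have hj₀mem : ((p : ℤ) ^ j₀) • g ∈ B ⊔ H := Nat.find_spec hex
  have hj₀pos : 1 ≤ j₀ := by
    rcases Nat.eq_zero_or_pos j₀ with h0 | h
    · exfalso; apply hg
      have := hj₀mem; rw [h0] at this; simpa using this
    · exact h
  set x := ((p : ℤ) ^ (j₀ - 1)) • g with hx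
  have hxK : x ∈ K := zsmul_mem hgK _
  have hxnot : x ∉ B ⊔ H := Nat.find_min hex (by omega)
  have hpx : (p : ℤ) • x ∈ B ⊔ H := by
    have hje : j₀ - 1 + 1 = j₀ := by omega
    have : (p : ℤ) • x = ((p : ℤ) ^ j₀) • g := by
      rw [hx, smul_smul, ← pow_succ', hje]
    rw [this]; exact hj₀mem
  rcases AddSubgroup.mem_sup.1 hpx with ⟨b, hbB, h', hh'H, hbh⟩
  -- p^(n-1) b = 0
  have hb0 : ((p : ℤ) ^ (n - 1)) • b = 0 := by
    have h1 : ((p : ℤ) ^ (n - 1)) • b = ((p : ℤ) ^ n) • x - ((p : ℤ) ^ (n - 1)) • h' := by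
      have hne : n - 1 + 1 = n := by omega
      have h2 : ((p : ℤ) ^ n) • x = ((p : ℤ) ^ (n - 1)) • ((p : ℤ) • x) := by
        conv_rhs => rw [smul_smul]
        rw [← pow_succ, hne]
      rw [h2, ← hbh, smul_add]; abel
    have hmem : ((p : ℤ) ^ n) • x ∈ H := hHS.2.2 (mem_pk.2 ⟨x, hxK, rfl⟩)
    have hinH : ((p : ℤ) ^ (n - 1)) • b ∈ H := by
      rw [h1]; exact sub_mem hmem (zsmul_mem hh'H _)
    have hinB : ((p : ℤ) ^ (n - 1)) • b ∈ B := zsmul_mem hbB _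
    have : ((p : ℤ) ^ (n - 1)) • b ∈ B ⊓ H := ⟨hinB, hinH⟩
    rw [hHS.2.1] at this
    exact this
  rcases hhom b hbB hb0 with ⟨y, hyB, hpy⟩
  set x' := x - y with hx'
  have hx'K : x' ∈ K := sub_mem hxK (hBK hyB)
  have hx'not : x' ∉ B ⊔ H := by
    intro hmem
    apply hxnot
    have : x = x' + y := by rw [hx']; abel
    rw [this]
    exact add_mem hmem ((le_sup_left : B ≤ B ⊔ H) hyB)
  have hpx' : (p : ℤ) • x' ∈ H := by
    have : (p : ℤ) • x' = (b + h') - b := by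
      rw [hx', smul_sub, hpy, hbh]
    rw [this, add_sub_cancel_left]
    exact hh'H
  -- H' := H ⊔ zmultiples x' is in S, contradiction with maximality
  set H' := H ⊔ zmultiples x' with hH'
  have hH'S : H' ∈ S := by
    refine ⟨sup_le hHS.1 (zmultiples_le' hx'K), ?_, le_trans hHS.2.2 le_sup_left⟩
    rw [eq_bot_iff]
    rintro z ⟨hzB, hzH'⟩
    rcases AddSubgroup.mem_sup.1 hzH' with ⟨h₁, hh₁, w, hw, hzw⟩
    rcases mem_zmultiples_iff.1 hw with ⟨c, rfl⟩
    by_cases hpc : (p : ℤ) ∣ c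
    · rcases hpc with ⟨c', rfl⟩
      have hcx' : (↑p * c') • x' ∈ H := by
        rw [mul_smul] at *
        rw [smul_comm]
        exact zsmul_mem hpx' c'
      have : z ∈ B ⊓ H := ⟨hzB, by rw [← hzw]; exact add_mem hh₁ hcx'⟩
      rw [hHS.2.1] at this
      exact this
    · exfalso
      apply hx'not
      have hcx'BH : c • x' ∈ B ⊔ H := by
        have : c • x' = z - h₁ := by rw [← hzw]; abel
        rw [this]
        exact sub_mem ((le_sup_left : B ≤ B ⊔ H) hzB) ((le_sup_right : H ≤ B ⊔ H) hh₁)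
      rcases hpG x' with ⟨s, hs⟩
      have hcop : IsCoprime c ((p : ℤ) ^ s) :=
        IsCoprime.pow_right (int_coprime_of_prime_not_dvd p hp hpc)
      rcases hcop with ⟨u, v, huv⟩
      have : x' = u • (c • x') := by
        rw [smul_smul]
        calc x' = ((u * c + v * (p : ℤ) ^ s)) • x' := by rw [huv, one_smul]
        _ = (u * c) • x' + v • (((p : ℤ) ^ s) • x') := by
              rw [add_smul, mul_smul, mul_smul]
        _ = (u * c) • x' := by rw [hs, smul_zero, add_zero]
      rw [this]
      exact zsmul_mem hcx'BH u
  have hx'H' : x' ∈ H' := (le_sup_right : zmultiples x' ≤ H') (mem_zmultiples x')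
  have : H' ≤ H := hmax.2 hH'S (le_sup_left : H ≤ H')
  exact hx'not ((le_sup_right : H ≤ B ⊔ H) (this hx'H'))


lemma cyclic_summand (hp : p.Prime) (hpG : ∀ g : G, ∃ n : ℕ, ((p : ℤ) ^ n) • g = 0)
    (hred : ∀ D : AddSubgroup G, DivisibleSub D → D = ⊥)
    (K : AddSubgroup G) (hK : K ≠ ⊥) :
    ∃ (b : G) (H : AddSubgroup G) (k : ℕ), b ∈ K ∧ b ≠ 0 ∧ addOrderOf b = p ^ (k + 1) ∧
      H ≤ K ∧ zmultiples b ⊓ H = ⊥ ∧ zmultiples b ⊔ H = K := by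
  haveI : Fact p.Prime := ⟨hp⟩
  have hpne : (p : ℤ) ≠ 0 := by exact_mod_cast hp.ne_zero
  rcases exists_socle p hp hpG hred K hK with ⟨a, haK, ha0, hpa, h, hh1, hh2⟩
  rcases mem_pk.1 hh1 with ⟨b, hbK, hba⟩
  have hb0 : b ≠ 0 := by
    rintro rfl
    rw [smul_zero] at hba
    exact ha0 hba.symm
  have hz : ∀ (m : ℕ) (g : G), ((p : ℕ) ^ m) • g = ((p : ℤ) ^ m) • g := by
    intro m g
    rw [← natCast_zsmul]
    norm_cast
  have hordb : addOrderOf b = p ^ (h + 1) := by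
    apply addOrderOf_eq_prime_pow
    · intro hcon
      apply ha0
      rw [← hba, ← hz h, hcon]
    · rw [hz (h+1), pow_succ', mul_smul, hba, hpa]
  have hordbz : (((p : ℕ) ^ (h + 1) : ℕ) : ℤ) = (p : ℤ) ^ (h + 1) := by push_cast; ring
  -- homogeneity
  have hhom : ∀ x ∈ zmultiples b, ((p : ℤ) ^ (h + 1 - 1)) • x = 0 →
      ∃ y ∈ zmultiples b, (p : ℤ) • y = x := by
    intro x hx hx0
    rcases mem_zmultiples_iff.1 hx with ⟨c, rfl⟩
    have h1 : ((p : ℤ) ^ h * c) • b = 0 := by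
      rw [mul_smul]
      simpa using hx0
    have h2 : ((p : ℤ) ^ (h + 1)) ∣ (p : ℤ) ^ h * c := by
      have := zsmul_ord h1
      rw [hordb] at this
      exact_mod_cast this
    have h3 : (p : ℤ) ∣ c := by
      rw [pow_succ] at h2
      exact (mul_dvd_mul_iff_left (pow_ne_zero h hpne)).1 h2
    rcases h3 with ⟨c', rfl⟩
    exact ⟨c' • b, mem_zmultiples_iff.2 ⟨c', rfl⟩, by rw [smul_smul]⟩
  -- purity
  have hBq : ∀ x ∈ zmultiples b, x ∈ pk p (h + 1) K → x = 0 := by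
    intro x hx hxpk
    by_contra hx0
    rcases mem_zmultiples_iff.1 hx with ⟨c, rfl⟩
    set d := c.natAbs with hd
    have hx' : ((d : ℤ)) • b ∈ pk p (h + 1) K ∧ ((d : ℤ)) • b ≠ 0 := by
      rcases Int.natAbs_eq c with hc | hc
      · rw [← hc]; exact ⟨hxpk, hx0⟩
      · have hdc : ((d : ℤ)) • b = -(c • b) := by
          rw [← neg_smul, hc, neg_neg, ← hd]
        rw [hdc]
        exact ⟨neg_mem hxpk, fun hcon => hx0 (by rwa [neg_eq_zero] at hcon)⟩

    have hd0 : d ≠ 0 := by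
      rintro h0
      apply hx'.2
      rw [h0]; simp
    set j := d.factorization p with hj
    set u := d / p ^ j with hu
    have hdju : p ^ j * u = d := Nat.ordProj_mul_ordCompl_eq_self d p
    have hpu : ¬ p ∣ u := Nat.not_dvd_ordCompl hp hd0
    have hjh : j ≤ h := by
      by_contra hcon
      apply hx'.2
      apply ord_zsmul
      rw [hordb]
      have h1 : p ^ (h + 1) ∣ p ^ j := pow_dvd_pow p (by omega)
      have h2 : (p : ℕ) ^ j ∣ d := Nat.ordProj_dvd d p
      exact_mod_cast (h1.trans h2)
    have hkey : (u : ℤ) • a ∈ pk p (h + 1) K := by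
      have h1 : ((p : ℤ) ^ (h - j)) • (((d : ℤ)) • b) = (u : ℤ) • a := by
        rw [smul_smul, ← hba, smul_smul]
        congr 1
        have : (d : ℤ) = (p : ℤ) ^ j * u := by exact_mod_cast hdju.symm
        rw [this, ← mul_assoc, ← pow_add]
        have : h - j + j = h := by omega
        rw [this, mul_comm]
      rw [← h1]
      exact zsmul_mem_pk hx'.1 _
    have hpuz : ¬ (p : ℤ) ∣ (u : ℤ) := by exact_mod_cast hpu
    rcases int_coprime_of_prime_not_dvd p hp hpuz with ⟨α, β, hαβ⟩
    apply hh2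
    have : a = α • ((u : ℤ) • a) := by
      rw [smul_smul]
      calc a = (α * u + β * p) • a := by rw [hαβ, one_smul]
      _ = (α * u) • a + β • ((p : ℤ) • a) := by rw [add_smul, mul_smul, mul_smul]
      _ = (α * u) • a := by rw [hpa, smul_zero, add_zero]
    rw [this]
    exact zsmul_mem_pk hkey α
  rcases zorn_compl p hp hpG (h + 1) (by omega) K (zmultiples b) (zmultiples_le' hbK)
    hhom hBq with ⟨H, hHK, hinf, hsup⟩
  exact ⟨b, H, h, hbK, hb0, hordb, hHK, hinf, hsup⟩


lemma exists_proj (A B : AddSubgroup G) (h1 : A ⊓ B = ⊥) (h2 : A ⊔ B = ⊤) :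
    ∃ r : G →+ G, (∀ a ∈ A, r a = a) ∧ (∀ b ∈ B, r b = 0) ∧ (∀ x, r x ∈ A) ∧
      ∀ x, x - r x ∈ B := by
  set A' := AddSubgroup.toIntSubmodule A with hA'
  set B' := AddSubgroup.toIntSubmodule B with hB'
  have hmemA : ∀ x : G, x ∈ A' ↔ x ∈ A := fun x => Iff.rfl
  have hmemB : ∀ x : G, x ∈ B' ↔ x ∈ B := fun x => Iff.rfl
  have hdisj : Disjoint A' B' := by
    rw [Submodule.disjoint_def]
    intro x hxA hxB
    have hx : x ∈ A ⊓ B := ⟨hxA, hxB⟩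
    rw [h1] at hx
    exact hx
  have hcodis : Codisjoint A' B' := by
    rw [codisjoint_iff_le_sup]
    intro x _
    have hx : x ∈ A ⊔ B := by rw [h2]; trivial
    rcases AddSubgroup.mem_sup.1 hx with ⟨a, ha, c, hc, hac⟩
    exact Submodule.mem_sup.2 ⟨a, ha, c, hc, hac⟩
  have hcompl : IsCompl A' B' := ⟨hdisj, hcodis⟩
  set π := Submodule.projectionOnto A' B' hcompl with hπ
  set r : G →+ G := (A'.subtype.comp π).toAddMonoidHom with hr
  have prop1 : ∀ a ∈ A, r a = a := by
    intro a ha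
    have := Submodule.linearProjOfIsCompl_apply_left hcompl ⟨a, ha⟩
    have h3 : (π a : G) = a := by rw [this]
    simpa [hr] using h3
  have prop2 : ∀ c ∈ B, r c = 0 := by
    intro c hc
    have := Submodule.linearProjOfIsCompl_apply_right hcompl ⟨c, hc⟩
    have h3 : (π c : G) = 0 := by rw [this]; rfl
    simpa [hr] using h3
  have prop3 : ∀ x, r x ∈ A := fun x => (π x).2
  refine ⟨r, prop1, prop2, prop3, ?_⟩
  intro x
  have hx : x ∈ A ⊔ B := by rw [h2]; trivial
  rcases AddSubgroup.mem_sup.1 hx with ⟨a, ha, c, hc, hac⟩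
  have h3 : r x = a := by
    rw [← hac, map_add, prop1 a ha, prop2 c hc, add_zero]
  rw [h3, ← hac, add_sub_cancel_left]
  exact hc

lemma chain_step (hp : p.Prime) (hpG : ∀ g : G, ∃ n : ℕ, ((p : ℤ) ^ n) • g = 0)
    (hred : ∀ D : AddSubgroup G, DivisibleSub D → D = ⊥)
    (K : AddSubgroup G) (hKinf : (K : Set G).Infinite) :
    ∃ (b : G) (H : AddSubgroup G) (k : ℕ), (H : Set G).Infinite ∧ b ∈ K ∧ b ≠ 0 ∧
      addOrderOf b = p ^ (k + 1) ∧ H ≤ K ∧ zmultiples b ⊓ H = ⊥ ∧ zmultiples b ⊔ H = K := by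
  have hK : K ≠ ⊥ := by
    rintro rfl
    exact hKinf (by simp)
  rcases cyclic_summand p hp hpG hred K hK with ⟨b, H, k, hbK, hb0, hord, hHK, hinf, hsup⟩
  refine ⟨b, H, k, ?_, hbK, hb0, hord, hHK, hinf, hsup⟩
  by_contra hHfin
  rw [Set.not_infinite] at hHfin
  have hfb : IsOfFinAddOrder b := by
    rw [← addOrderOf_pos_iff, hord]
    exact pow_pos hp.pos _
  have hzfin : ((zmultiples b : AddSubgroup G) : Set G).Finite := hfb.finite_zmultiples
  apply hKinf
  have hsub : (K : Set G) ⊆ ((zmultiples b : AddSubgroup G) : Set G) + (H : Set G) := by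
    intro x hxK
    have : x ∈ zmultiples b ⊔ H := by rw [hsup]; exact hxK
    rcases AddSubgroup.mem_sup.1 this with ⟨y, hy, z, hz, hyz⟩
    exact Set.mem_add.2 ⟨y, hy, z, hz, hyz⟩
  exact (hzfin.add hHfin).subset hsub

lemma exists_chain (hp : p.Prime) (hpG : ∀ g : G, ∃ n : ℕ, ((p : ℤ) ^ n) • g = 0)
    (hred : ∀ D : AddSubgroup G, DivisibleSub D → D = ⊥) (hG : Infinite G) :
    ∃ (b : ℕ → G) (K : ℕ → AddSubgroup G) (k : ℕ → ℕ), K 0 = ⊤ ∧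
      ∀ n : ℕ, b n ∈ K n ∧ b n ≠ 0 ∧ addOrderOf (b n) = p ^ (k n + 1) ∧
        K (n+1) ≤ K n ∧ zmultiples (b n) ⊓ K (n+1) = ⊥ ∧ zmultiples (b n) ⊔ K (n+1) = K n := by
  classical
  haveI := hG
  set T := {K : AddSubgroup G // (K : Set G).Infinite} with hT
  have hstep : ∀ K : T, ∃ t : G × T × ℕ,
      t.1 ∈ K.1 ∧ t.1 ≠ 0 ∧ addOrderOf t.1 = p ^ (t.2.2 + 1) ∧ (t.2.1.1 : AddSubgroup G) ≤ K.1 ∧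
      zmultiples t.1 ⊓ t.2.1.1 = ⊥ ∧ zmultiples t.1 ⊔ t.2.1.1 = K.1 := by
    intro K
    rcases chain_step p hp hpG hred K.1 K.2 with ⟨b, H, k, hinf, hbK, hb0, hord, hHK, h1, h2⟩
    exact ⟨⟨b, ⟨H, hinf⟩, k⟩, hbK, hb0, hord, hHK, h1, h2⟩
  set next : T → G × T × ℕ := fun K => Classical.choose (hstep K) with hnextdef
  have hnext := fun K => Classical.choose_spec (hstep K)
  have htop : ((⊤ : AddSubgroup G) : Set G).Infinite := by
    rw [AddSubgroup.coe_top]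
    exact Set.infinite_univ
  set seq : ℕ → T := fun n => Nat.rec ⟨⊤, htop⟩ (fun _ ih => (next ih).2.1) n with hseqdef
  have hseq : ∀ n, seq (n+1) = (next (seq n)).2.1 := fun n => rfl
  refine ⟨fun n => (next (seq n)).1, fun n => (seq n).1, fun n => (next (seq n)).2.2, rfl, ?_⟩
  intro n
  rcases hnext (seq n) with ⟨h1, h2, h3, h4, h5, h6⟩
  refine ⟨h1, h2, h3, ?_, ?_, ?_⟩
  · show ((seq (n+1) : T) : AddSubgroup G) ≤ ((seq n : T) : AddSubgroup G)
    rw [hseq n]; exact h4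
  · show zmultiples ((next (seq n)).1) ⊓ ((seq (n+1) : T) : AddSubgroup G) = ⊥
    rw [hseq n]; exact h5
  · show zmultiples ((next (seq n)).1) ⊔ ((seq (n+1) : T) : AddSubgroup G) = ((seq n : T) : AddSubgroup G)
    rw [hseq n]; exact h6

lemma exists_projections (b : ℕ → G) (K : ℕ → AddSubgroup G) (hK0 : K 0 = ⊤)
    (hprops : ∀ n, b n ∈ K n ∧ K (n+1) ≤ K n ∧ zmultiples (b n) ⊓ K (n+1) = ⊥ ∧
      zmultiples (b n) ⊔ K (n+1) = K n) :
    ∃ π : ℕ → G →+ G,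
      (∀ n x, π n x ∈ zmultiples (b n)) ∧
      (∀ n, π n (b n) = b n) ∧
      (∀ n m, n ≠ m → π n (b m) = 0) := by
  classical
  set S : ℕ → AddSubgroup G := fun n => Nat.rec ⊥ (fun m ih => ih ⊔ zmultiples (b m)) n
    with hSdef
  have hSsucc : ∀ n, S (n+1) = S n ⊔ zmultiples (b n) := fun n => rfl
  have hSmono : Monotone S := by
    apply monotone_nat_of_le_succ
    intro n
    rw [hSsucc]
    exact le_sup_left
  have hKmono : ∀ {m n : ℕ}, m ≤ n → K n ≤ K m := by
    intro m n hmn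
    induction n with
    | zero => have : m = 0 := by omega
              rw [this]
    | succ n ih =>
      rcases Nat.lt_or_ge m (n+1) with hlt | hge
      · exact le_trans (hprops n).2.1 (ih (by omega))
      · have : m = n + 1 := by omega
        rw [this]
  have hcompl : ∀ n, S n ⊓ K n = ⊥ ∧ S n ⊔ K n = ⊤ := by
    intro n
    induction n with
    | zero =>
      have h0 : S 0 = ⊥ := rfl
      rw [h0, hK0]
      simp
    | succ n ih =>
      constructor
      · rw [eq_bot_iff]
        rintro x ⟨hxS, hxK⟩
        rw [hSsucc] at hxS
        rcases AddSubgroup.mem_sup.1 hxS with ⟨s, hs, z, hz, hsz⟩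
        have hzKn : z ∈ K n := ((hprops n).2.2.2 ▸ (le_sup_left : zmultiples (b n) ≤ _)) hz
        have hxKn : x ∈ K n := (hprops n).2.1 hxK
        have hsKn : s ∈ K n := by
          have : s = x - z := by rw [← hsz]; abel
          rw [this]; exact sub_mem hxKn hzKn
        have : s ∈ S n ⊓ K n := ⟨hs, hsKn⟩
        rw [ih.1] at this
        rw [AddSubgroup.mem_bot] at this
        rw [this, zero_add] at hsz
        rw [← hsz] at hxK ⊢
        have : z ∈ zmultiples (b n) ⊓ K (n+1) := ⟨hz, hxK⟩
        rw [(hprops n).2.2.1] at this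
        exact this
      · rw [hSsucc, sup_assoc, (hprops n).2.2.2]
        exact ih.2
  have hproj : ∀ n, ∃ r : G →+ G, (∀ a ∈ K n, r a = a) ∧ (∀ c ∈ S n, r c = 0) ∧
      (∀ x, r x ∈ K n) ∧ ∀ x, x - r x ∈ S n := by
    intro n
    apply exists_proj
    · rw [inf_comm]; exact (hcompl n).1
    · rw [sup_comm]; exact (hcompl n).2
  choose ρ hρ1 hρ2 hρ3 hρ4 using hproj
  have hbS : ∀ {m n : ℕ}, m < n → b m ∈ S n := by
    intro m n hmn
    have : b m ∈ S (m+1) := by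
      rw [hSsucc]
      exact (le_sup_right : zmultiples (b m) ≤ _) (mem_zmultiples (b m))
    exact hSmono hmn this
  have hbZS : ∀ n, b n ∈ S (n+1) := fun n => hbS (Nat.lt_succ_self n)
  refine ⟨fun n => ρ n - ρ (n+1), ?_, ?_, ?_⟩
  · intro n x
    have hKx : ρ n x ∈ K n := hρ3 n x
    have : ρ n x ∈ zmultiples (b n) ⊔ K (n+1) := by rw [(hprops n).2.2.2]; exact hKx
    rcases AddSubgroup.mem_sup.1 this with ⟨z, hz, kk, hkk, hzk⟩
    have hρ1x : ρ (n+1) x = kk := by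
      have hxdec : x = (x - ρ n x) + z + kk := by rw [← hzk]; abel
      have e1 : ρ (n+1) (x - ρ n x) = 0 :=
        hρ2 (n+1) _ (hSmono (Nat.le_succ n) (hρ4 n x))
      have e2 : ρ (n+1) z = 0 := by
        apply hρ2 (n+1)
        rw [hSsucc]
        exact (le_sup_right : zmultiples (b n) ≤ _) hz
      have e3 : ρ (n+1) kk = kk := hρ1 (n+1) kk hkk
      calc ρ (n+1) x = ρ (n+1) ((x - ρ n x) + z + kk) := by rw [← hxdec]
      _ = ρ (n+1) (x - ρ n x) + ρ (n+1) z + ρ (n+1) kk := by rw [map_add, map_add]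
      _ = kk := by rw [e1, e2, e3, zero_add, zero_add]
    have : (ρ n - ρ (n+1)) x = z := by
      simp only [AddMonoidHom.sub_apply]
      rw [hρ1x, ← hzk]
      abel
    rw [this]
    exact hz
  · intro n
    have e1 : ρ n (b n) = b n := hρ1 n (b n) (hprops n).1
    have e2 : ρ (n+1) (b n) = 0 := hρ2 (n+1) (b n) (hbZS n)
    simp only [AddMonoidHom.sub_apply]
    rw [e1, e2, sub_zero]
  · intro n m hnm
    simp only [AddMonoidHom.sub_apply]
    rcases Nat.lt_or_ge m n with hlt | hge
    · have e1 : ρ n (b m) = 0 := hρ2 n (b m) (hbS hlt)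
      have e2 : ρ (n+1) (b m) = 0 := hρ2 (n+1) (b m) (hbS (show m < n+1 by omega))
      rw [e1, e2, sub_zero]
    · have hmn : n + 1 ≤ m := by omega
      have hbm : b m ∈ K (n+1) := hKmono hmn (hprops m).1
      have e1 : ρ n (b m) = b m := hρ1 n (b m) ((hprops n).2.1 hbm)
      have e2 : ρ (n+1) (b m) = b m := hρ1 (n+1) (b m) hbm
      rw [e1, e2, sub_self]


lemma rep_lemma (b : ℕ → G) (π : ℕ → G →+ G)
    (hπb : ∀ n, π n (b n) = b n) (hπδ : ∀ n m, n ≠ m → π n (b m) = 0)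
    (J : Set ℕ) :
    ∀ x ∈ AddSubgroup.closure (b '' J), ∃ F : Finset ℕ, ↑F ⊆ J ∧
      (∀ n, n ∉ F → π n x = 0) ∧ x = ∑ n ∈ F, π n x := by
  intro x hx
  refine AddSubgroup.closure_induction ?_ ?_ ?_ ?_ hx
  · rintro y ⟨m, hmJ, rfl⟩
    refine ⟨{m}, by simpa using hmJ, ?_, ?_⟩
    · intro n hn
      exact hπδ n m (by simpa using hn)
    · rw [Finset.sum_singleton, hπb]
  · exact ⟨∅, by simp, fun n _ => map_zero _, by simp⟩
  · rintro y z - - ⟨Fy, hFy, hy0, hysum⟩ ⟨Fz, hFz, hz0, hzsum⟩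
    refine ⟨Fy ∪ Fz, ?_, ?_, ?_⟩
    · intro n hn
      rcases Finset.mem_union.1 hn with h | h
      · exact hFy h
      · exact hFz h
    · intro n hn
      rw [Finset.mem_union] at hn
      push_neg at hn
      rw [map_add, hy0 n hn.1, hz0 n hn.2, add_zero]
    · have h1 : ∑ n ∈ Fy ∪ Fz, π n (y + z) =
          (∑ n ∈ Fy ∪ Fz, π n y) + (∑ n ∈ Fy ∪ Fz, π n z) := by
        rw [← Finset.sum_add_distrib]
        exact Finset.sum_congr rfl (fun n _ => map_add _ _ _)
      have h2 : ∑ n ∈ Fy ∪ Fz, π n y = ∑ n ∈ Fy, π n y := by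
        apply (Finset.sum_subset Finset.subset_union_left ?_).symm
        intro n _ hn
        exact hy0 n hn
      have h3 : ∑ n ∈ Fy ∪ Fz, π n z = ∑ n ∈ Fz, π n z := by
        apply (Finset.sum_subset Finset.subset_union_right ?_).symm
        intro n _ hn
        exact hz0 n hn
      rw [h1, h2, h3, ← hysum, ← hzsum]
  · rintro y - ⟨F, hF, hy0, hysum⟩
    refine ⟨F, hF, ?_, ?_⟩
    · intro n hn
      rw [map_neg, hy0 n hn, neg_zero]
    · have : ∑ n ∈ F, π n (-y) = - ∑ n ∈ F, π n y := by
        rw [← Finset.sum_neg_distrib]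
        exact Finset.sum_congr rfl (fun n _ => map_neg _ _)
      rw [this, ← hysum]

lemma main_contradiction (b : ℕ → G) (π : ℕ → G →+ G) (s τ : ℕ → ℕ) (t : ℕ → G)
    (hπline : ∀ n x, ∃ c : ℤ, π n x = c • b n)
    (hss_eq : ∀ j, π (s j) (b (s j)) = b (s j))
    (hss_ne : ∀ j j', j ≠ j' → π (s j) (b (s j')) = 0)
    (hts : ∀ j j', π (τ j) (b (s j')) = 0)
    (hττ_eq : ∀ j, ∀ c : ℤ, π (τ j) (c • t j) = c • t j)
    (hττ_ne : ∀ j j', j ≠ j' → ∀ c : ℤ, π (τ j) (c • t j') = 0)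
    (hsτ : ∀ j j', ∀ c : ℤ, π (s j) (c • t j') = 0)
    (horder : ∀ j (c : ℤ), c • b (s j) = 0 → c • t j = 0)
    (htne : ∀ j, t j ≠ 0)
    (hsupp : ∀ x, ∃ F : Finset ℕ, ∀ j ∉ F, ∀ c : ℤ, π (s j) x = c • b (s j) → c • t j = 0)
    (hCI : ∀ C : AddSubgroup G, CompletelyInert C) : False := by
  classical
  set coef : ℕ → G → ℤ := fun j x => Classical.choose (hπline (s j) x) with hcoef
  have hcoefspec : ∀ j x, π (s j) x = coef j x • b (s j) :=
    fun j x => Classical.choose_spec (hπline (s j) x)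
  set α : ℕ → G → G := fun j x => coef j x • t j with hα
  have hαspec : ∀ j x (c : ℤ), π (s j) x = c • b (s j) → α j x = c • t j := by
    intro j x c hc
    have h1 : (coef j x - c) • b (s j) = 0 := by
      rw [sub_smul, ← hcoefspec j x, hc, sub_self]
    have h2 := horder j _ h1
    rw [sub_smul, sub_eq_zero] at h2
    exact h2
  have hαsupp : ∀ x, (Function.support (fun j => α j x)).Finite := by
    intro x
    rcases hsupp x with ⟨F, hF⟩
    apply Set.Finite.subset F.finite_toSet
    intro j hj
    by_contra hjF
    exact hj (hF j hjF _ (hcoefspec j x))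
  have hαadd : ∀ j x y, α j (x + y) = α j x + α j y := by
    intro j x y
    have h1 : π (s j) (x + y) = (coef j x + coef j y) • b (s j) := by
      rw [map_add, hcoefspec j x, hcoefspec j y, add_smul]
    rw [hαspec j (x+y) _ h1, add_smul]
  set φ : G →+ G := AddMonoidHom.mk' (fun x => ∑ᶠ j, α j x) (by
    intro x y
    calc ∑ᶠ j, α j (x + y) = ∑ᶠ j, (α j x + α j y) := finsum_congr (fun j => hαadd j x y)
    _ = (∑ᶠ j, α j x) + ∑ᶠ j, α j y := finsum_add_distrib (hαsupp x) (hαsupp y)) with hφ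
  have hφapply : ∀ x, φ x = ∑ᶠ j, α j x := fun x => rfl
  have hαmul : ∀ j x, α j x = coef j x • t j := fun j x => rfl
  have hφb : ∀ j, φ (b (s j)) = t j := by
    intro j
    rw [hφapply]
    rw [finsum_eq_single _ j ?_]
    · have h1 : π (s j) (b (s j)) = (1 : ℤ) • b (s j) := by rw [one_smul, hss_eq]
      rw [hαspec j _ 1 h1, one_smul]
    · intro j' hj'
      have h1 : π (s j') (b (s j)) = (0 : ℤ) • b (s j') := by
        rw [zero_smul, hss_ne j' j hj']
      rw [hαspec j' _ 0 h1, zero_smul]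
  have hπτφ : ∀ j x, π (τ j) (φ x) = α j x := by
    intro j x
    rw [hφapply, AddMonoidHom.map_finsum _ (hαsupp x)]
    rw [finsum_eq_single _ j ?_]
    · rw [hαmul j x]
      exact hττ_eq j _
    · intro j' hj'
      rw [hαmul j' x]
      exact hττ_ne j j' (Ne.symm hj') _
  have hπsφ : ∀ j x, π (s j) (φ x) = 0 := by
    intro j x
    rw [hφapply, AddMonoidHom.map_finsum _ (hαsupp x)]
    have : ∀ j', π (s j) (α j' x) = 0 := by
      intro j'
      rw [hαmul j' x]
      exact hsτ j j' _
    calc ∑ᶠ j', π (s j) (α j' x) = ∑ᶠ (j' : ℕ), (0 : G) := finsum_congr this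
    _ = 0 := finsum_zero
  have hφφ : ∀ x, φ (φ x) = 0 := by
    intro x
    have hz : ∀ j, α j (φ x) = 0 := by
      intro j
      have h1 : π (s j) (φ x) = (0 : ℤ) • b (s j) := by rw [zero_smul, hπsφ j x]
      rw [hαspec j _ 0 h1, zero_smul]
    rw [hφapply]
    calc ∑ᶠ j, α j (φ x) = ∑ᶠ (j : ℕ), (0 : G) := finsum_congr hz
    _ = 0 := finsum_zero
  set ψ : G ≃+ G :=
    { toFun := fun x => x + φ x
      invFun := fun x => x - φ x
      left_inv := by
        intro x
        simp only [map_add, hφφ x, add_zero]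
        abel
      right_inv := by
        intro x
        simp only [map_sub, hφφ x, sub_zero]
        abel
      map_add' := by
        intro x y
        show (x + y) + φ (x + y) = (x + φ x) + (y + φ y)
        rw [map_add]
        abel } with hψ
  have hψapply : ∀ x, (ψ : G →+ G) x = x + φ x := fun x => rfl
  set C : AddSubgroup G := AddSubgroup.closure (Set.range (fun j => b (s j))) with hC
  have hbC : ∀ j, b (s j) ∈ C := fun j => AddSubgroup.subset_closure ⟨j, rfl⟩
  have hCτ : ∀ j, ∀ x ∈ C, π (τ j) x = 0 := by
    intro j x hx
    refine AddSubgroup.closure_induction ?_ ?_ ?_ ?_ hx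
    · rintro y ⟨j', rfl⟩
      exact hts j j'
    · exact map_zero _
    · intro y z _ _ hy hz
      rw [map_add, hy, hz, add_zero]
    · intro y _ hy
      rw [map_neg, hy, neg_zero]
  have hker : ∀ x ∈ C ⊓ C.map (ψ : G →+ G), φ x = 0 := by
    rintro x ⟨hxC, hxM⟩
    rcases AddSubgroup.mem_map.1 hxM with ⟨c, hcC, hcx⟩
    rw [hψapply] at hcx
    have hφcC : φ c ∈ C := by
      have : φ c = x - c := by rw [← hcx]; abel
      rw [this]
      exact sub_mem hxC hcC
    have hφc0 : φ c = 0 := by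
      have hz : ∀ j, α j c = 0 := by
        intro j
        rw [← hπτφ j c]
        exact hCτ j _ hφcC
      rw [hφapply]
      calc ∑ᶠ j, α j c = ∑ᶠ (j : ℕ), (0 : G) := finsum_congr hz
      _ = 0 := finsum_zero
    have hxc : x = c := by rw [← hcx, hφc0, add_zero]
    rw [hxc, hφc0]
  have htinj : Function.Injective t := by
    intro j j' hjj'
    by_contra hne
    apply htne j
    have h1 : π (τ j) (t j) = t j := by
      have := hττ_eq j 1
      simpa using this
    have h2 : π (τ j) (t j') = 0 := by
      have := hττ_ne j j' hne 1
      simpa using this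
    rw [← h1, hjj', h2]
  -- the quotient is infinite
  obtain ⟨h1, -⟩ := hCI C ψ
  apply h1
  show ((C ⊓ C.map (ψ : G →+ G)).addSubgroupOf C).index = 0
  rw [AddSubgroup.index_eq_card]
  haveI : Infinite (↥C ⧸ ((C ⊓ C.map (ψ : G →+ G)).addSubgroupOf C)) := by
    apply Infinite.of_injective
      (fun j : ℕ => QuotientAddGroup.mk (⟨b (s j), hbC j⟩ : ↥C)
        (s := (C ⊓ C.map (ψ : G →+ G)).addSubgroupOf C))
    intro j j' hjj'
    rw [QuotientAddGroup.eq] at hjj'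
    rw [AddSubgroup.mem_addSubgroupOf] at hjj'
    have hmem : (-(b (s j)) + b (s j')) ∈ C ⊓ C.map (ψ : G →+ G) := by
      exact_mod_cast hjj'
    have hφ0 := hker _ hmem
    rw [map_add, map_neg, hφb, hφb] at hφ0
    have : t j = t j' := by
      have := hφ0
      rw [neg_add_eq_zero] at this
      exact this
    exact htinj this
  exact Nat.card_eq_zero_of_infinite


lemma smul_b_zero_iff (b : ℕ → G) (k : ℕ → ℕ)
    (hord : ∀ n, addOrderOf (b n) = p ^ (k n + 1)) (n : ℕ) (c : ℤ) :
    c • b n = 0 ↔ ((p : ℤ) ^ (k n + 1)) ∣ c := by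
  have hcast : (addOrderOf (b n) : ℤ) = (p : ℤ) ^ (k n + 1) := by
    rw [hord n]; push_cast; ring
  constructor
  · intro h
    rw [← hcast]
    exact zsmul_ord h
  · intro h
    apply ord_zsmul
    rw [hcast]
    exact h

lemma dvd_cancel_pow (hpne : (p : ℤ) ≠ 0) (a i : ℕ) (c : ℤ)
    (h : ((p : ℤ) ^ (a + i)) ∣ ((p : ℤ) ^ a * c)) : ((p : ℤ) ^ i) ∣ c := by
  rw [pow_add] at h
  exact (mul_dvd_mul_iff_left (pow_ne_zero a hpne)).1 h

section Cases

variable (hp : p.Prime) (hpG' : ∀ g : G, ∃ n : ℕ, ((p : ℤ) ^ n) • g = 0)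
variable (b : ℕ → G) (K : ℕ → AddSubgroup G) (k : ℕ → ℕ) (π : ℕ → G →+ G)
variable (hbne : ∀ n, b n ≠ 0) (hord : ∀ n, addOrderOf (b n) = p ^ (k n + 1))
variable (hπline : ∀ n x, ∃ c : ℤ, π n x = c • b n)
variable (hπb : ∀ n, π n (b n) = b n) (hπδ : ∀ n m, n ≠ m → π n (b m) = 0)

include hp hpG' hbne hord hπline hπb hπδ

lemma caseB (hCI : ∀ C : AddSubgroup G, CompletelyInert C)
    (v : ℕ) (hv : {n : ℕ | k n = v}.Infinite) : False := by
  classical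
  have hpne : (p : ℤ) ≠ 0 := by exact_mod_cast hp.ne_zero
  set I := {n : ℕ | k n = v} with hI
  set B' := AddSubgroup.closure (b '' I) with hB'
  have hbB' : ∀ n ∈ I, b n ∈ B' := fun n hn => AddSubgroup.subset_closure ⟨n, hn, rfl⟩
  have REP := rep_lemma b π hπb hπδ I
  -- purity
  have hBq : ∀ x ∈ B', x ∈ pk p (v + 1) (⊤ : AddSubgroup G) → x = 0 := by
    intro x hx hpk
    rcases REP x hx with ⟨F, hFI, h0, hsum⟩
    rcases mem_pk.1 hpk with ⟨y, -, hy⟩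
    rw [hsum]
    apply Finset.sum_eq_zero
    intro n hn
    rcases hπline n y with ⟨c, hc⟩
    have h1 : π n x = ((p : ℤ) ^ (v + 1) * c) • b n := by
      rw [← hy, map_zsmul, hc, smul_smul]
    have hnv : k n = v := hFI hn
    rw [h1, (smul_b_zero_iff p b k hord n _).2]
    rw [hnv]
    exact Dvd.intro c rfl
  -- homogeneity
  have hhom : ∀ x ∈ B', ((p : ℤ) ^ (v + 1 - 1)) • x = 0 → ∃ y ∈ B', (p : ℤ) • y = x := by
    intro x hx hx0
    simp only [Nat.add_sub_cancel] at hx0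
    rcases REP x hx with ⟨F, hFI, h0, hsum⟩
    have h5 : ∀ n : ℕ, ∃ yn : G, n ∈ F → (yn ∈ B' ∧ (p : ℤ) • yn = π n x) := by
      intro n
      by_cases hn : n ∈ F
      · rcases hπline n x with ⟨c, hc⟩
        have h1 : ((p : ℤ) ^ v * c) • b n = 0 := by
          rw [mul_smul, ← hc, ← map_zsmul, hx0, map_zero]
        have hnv : k n = v := hFI hn
        have h2 : ((p : ℤ) ^ (v + 1)) ∣ ((p : ℤ) ^ v * c) := by
          have h2' := (smul_b_zero_iff p b k hord n _).1 h1
          rw [hnv] at h2'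
          exact h2'
        have h3 : (p : ℤ) ∣ c := by
          have := dvd_cancel_pow p hpne v 1 c h2
          simpa [pow_one] using this
        rcases h3 with ⟨d, rfl⟩
        refine ⟨d • b n, fun _ => ⟨zsmul_mem (hbB' n (hFI hn)) d, ?_⟩⟩
        rw [hc, smul_smul, mul_comm]
      · exact ⟨0, fun h => absurd h hn⟩
    choose yf hyf using h5
    refine ⟨∑ n ∈ F, yf n, sum_mem (fun n hn => (hyf n hn).1), ?_⟩
    rw [Finset.smul_sum]
    rw [hsum]
    exact Finset.sum_congr rfl (fun n hn => (hyf n hn).2)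
  rcases zorn_compl p hp hpG' (v + 1) (by omega) ⊤ B' le_top hhom hBq with
    ⟨H, -, hinf, hsup⟩
  rcases exists_proj B' H hinf hsup with ⟨P, hP1, hP2, hP3, hP4⟩
  -- enumerate I
  set e := hv.natEmbedding with he
  set σ : ℕ → ℕ := fun i => (e i : ℕ) with hσ
  have hσI : ∀ i, σ i ∈ I := fun i => (e i).2
  have hσinj : Function.Injective σ := fun i j hij => e.injective (Subtype.ext hij)
  set s : ℕ → ℕ := fun j => σ (2 * j) with hs
  set τ' : ℕ → ℕ := fun j => σ (2 * j + 1) with hτ'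
  set t : ℕ → G := fun j => b (τ' j) with ht
  set π' : ℕ → G →+ G := fun n => (π n).comp P with hπ'
  have hπ'apply : ∀ n x, π' n x = π n (P x) := fun n x => rfl
  have hsinj : Function.Injective s := fun i j hij => by
    have := hσinj hij; omega
  have hbfix : ∀ n ∈ I, P (b n) = b n := fun n hn => hP1 _ (hbB' n hn)
  have hsτ'ne : ∀ j j', s j ≠ τ' j' := by
    intro j j' hcon
    have := hσinj hcon; omega
  have horder : ∀ j (c : ℤ), c • b (s j) = 0 → c • t j = 0 := by
    intro j c hc
    have h1 := (smul_b_zero_iff p b k hord (s j) c).1 hc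
    apply (smul_b_zero_iff p b k hord (τ' j) c).2
    have e1 : k (s j) = v := hσI (2 * j)
    have e2 : k (τ' j) = v := hσI (2 * j + 1)
    rw [e2]
    rw [e1] at h1
    exact h1
  apply main_contradiction b π' s τ' t ?_ ?_ ?_ ?_ ?_ ?_ ?_ horder ?_ ?_ hCI
  · intro n x
    exact hπline n (P x)
  · intro j
    rw [hπ'apply, hbfix _ (hσI (2 * j)), hπb]
  · intro j j' hjj'
    rw [hπ'apply, hbfix _ (hσI (2 * j')), hπδ]
    intro hcon
    exact hjj' (by have := hσinj hcon; omega)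
  · intro j j'
    rw [hπ'apply, hbfix _ (hσI (2 * j')), hπδ]
    exact (Ne.symm (hsτ'ne j' j))
  · intro j c
    rw [hπ'apply, map_zsmul, hbfix _ (hσI (2 * j + 1)), map_zsmul, hπb]
  · intro j j' hjj' c
    rw [hπ'apply, map_zsmul, hbfix _ (hσI (2 * j' + 1)), map_zsmul, hπδ, smul_zero]
    intro hcon
    exact hjj' (by have := hσinj hcon; omega)
  · intro j j' c
    rw [hπ'apply, map_zsmul, hbfix _ (hσI (2 * j' + 1)), map_zsmul, hπδ, smul_zero]
    exact hsτ'ne j j'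
  · intro j
    exact hbne (τ' j)
  · intro x
    rcases REP (P x) (hP3 x) with ⟨F₀, -, h0, -⟩
    refine ⟨F₀.preimage s (hsinj.injOn), ?_⟩
    intro j hj c hc
    have hsj : s j ∉ F₀ := by
      intro hcon
      exact hj (Finset.mem_preimage.2 hcon)
    rw [hπ'apply, h0 _ hsj] at hc
    exact horder j c hc.symm

lemma caseU (hCI : ∀ C : AddSubgroup G, CompletelyInert C)
    (hfib : ∀ v : ℕ, {n : ℕ | k n = v}.Finite) : False := by
  classical
  have hpne : (p : ℤ) ≠ 0 := by exact_mod_cast hp.ne_zero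
  have hbig : ∀ t0 : ℕ, ∃ n, t0 ≤ k n := by
    intro t0
    have hfin : {n : ℕ | k n ≤ t0}.Finite := by
      induction t0 with
      | zero =>
        refine (hfib 0).subset ?_
        intro n hn
        simp only [Set.mem_setOf_eq] at *
        omega
      | succ t ih =>
        have hsub : {n : ℕ | k n ≤ t + 1} ⊆ {n : ℕ | k n ≤ t} ∪ {n : ℕ | k n = t + 1} := by
          intro n hn
          simp only [Set.mem_setOf_eq, Set.mem_union] at *
          omega
        exact (ih.union (hfib (t + 1))).subset hsub
    rcases hfin.infinite_compl.nonempty with ⟨n, hn⟩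
    simp only [Set.mem_compl_iff, Set.mem_setOf_eq, not_le] at hn
    exact ⟨n, by omega⟩
  set m : ℕ → ℕ := fun i =>
    Nat.rec (Classical.choose (hbig 0))
      (fun i ih => Classical.choose (hbig (max (k ih + 1) (i + 2)))) i with hm
  have hmsucc : ∀ i, max (k (m i) + 1) (i + 2) ≤ k (m (i + 1)) := by
    intro i
    exact Classical.choose_spec (hbig (max (k (m i) + 1) (i + 2)))
  have hmono : StrictMono (fun i => k (m i)) := by
    apply strictMono_nat_of_lt_succ
    intro i
    have := hmsucc i
    omega
  have hminj : ∀ i j : ℕ, m i = m j → i = j := by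
    intro i j hij
    have : k (m i) = k (m j) := by rw [hij]
    exact hmono.injective this
  have hklb : ∀ i, i + 2 ≤ k (m (i + 1)) := by
    intro i
    have := hmsucc i
    omega
  set s : ℕ → ℕ := fun j => m (2 * j + 1) with hs
  set τ' : ℕ → ℕ := fun j => m (2 * j + 2) with hτ'
  have hseq : ∀ j, s j = m (2 * j + 1) := fun j => rfl
  have hτeq : ∀ j, τ' j = m (2 * j + 2) := fun j => rfl
  have hks : ∀ j, 2 * j + 2 ≤ k (s j) := by
    intro j
    rw [hseq]
    exact hklb (2 * j)
  have hkτ : ∀ j, 2 * j + 3 ≤ k (τ' j) := by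
    intro j
    rw [hτeq]
    have := hklb (2 * j + 2 - 1)
    have h2 : 2 * j + 2 - 1 + 1 = 2 * j + 2 := by omega
    rw [h2] at this
    omega
  set ee : ℕ → ℕ := fun j => k (τ' j) - j with hee
  have heeq : ∀ j, ee j = k (τ' j) - j := fun j => rfl
  have heesum : ∀ j, (j + 1) + ee j = k (τ' j) + 1 := by
    intro j
    have h1 := hkτ j
    rw [heeq]
    omega
  set t : ℕ → G := fun j => ((p : ℤ) ^ ee j) • b (τ' j) with ht
  have hsτ'ne : ∀ j j', s j ≠ τ' j' := by
    intro j j' hcon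
    rw [hseq, hτeq] at hcon
    have := hminj (2 * j + 1) (2 * j' + 2) hcon; omega
  have hsinj : Function.Injective s := fun i j hij => by
    rw [hseq, hseq] at hij
    have := hminj (2 * i + 1) (2 * j + 1) hij; omega
  have hτinj : Function.Injective τ' := fun i j hij => by
    rw [hτeq, hτeq] at hij
    have := hminj (2 * i + 2) (2 * j + 2) hij; omega
  have hdvdt : ∀ j (c : ℤ), ((p : ℤ) ^ (j + 1)) ∣ c → c • t j = 0 := by
    intro j c hc
    rcases hc with ⟨d, rfl⟩
    rw [ht]
    show ((p : ℤ) ^ (j + 1) * d) • ((p : ℤ) ^ ee j) • b (τ' j) = 0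
    rw [smul_smul]
    apply (smul_b_zero_iff p b k hord (τ' j) _).2
    have h9 : (p : ℤ) ^ (j + 1) * d * (p : ℤ) ^ ee j = (p : ℤ) ^ (k (τ' j) + 1) * d := by
      rw [mul_right_comm, ← pow_add, heesum j]
    rw [h9]
    exact Dvd.intro d rfl
  have horder : ∀ j (c : ℤ), c • b (s j) = 0 → c • t j = 0 := by
    intro j c hc
    have h1 := (smul_b_zero_iff p b k hord (s j) c).1 hc
    apply hdvdt j c
    exact dvd_trans (pow_dvd_pow _ (by have := hks j; omega)) h1
  apply main_contradiction b π s τ' t hπline ?_ ?_ ?_ ?_ ?_ ?_ horder ?_ ?_ hCI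
  · intro j
    exact hπb (s j)
  · intro j j' hjj'
    apply hπδ
    intro hcon
    exact hjj' (hsinj hcon)
  · intro j j'
    exact hπδ _ _ (Ne.symm (hsτ'ne j' j))
  · intro j c
    rw [ht]
    show π (τ' j) (c • ((p : ℤ) ^ ee j) • b (τ' j)) = c • ((p : ℤ) ^ ee j) • b (τ' j)
    rw [map_zsmul, map_zsmul, hπb]
  · intro j j' hjj' c
    rw [ht]
    show π (τ' j) (c • ((p : ℤ) ^ ee j') • b (τ' j')) = 0
    rw [map_zsmul, map_zsmul, hπδ _ _ (fun hcon => hjj' (hτinj hcon)), smul_zero, smul_zero]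
  · intro j j' c
    rw [ht]
    show π (s j) (c • ((p : ℤ) ^ ee j') • b (τ' j')) = 0
    rw [map_zsmul, map_zsmul, hπδ _ _ (hsτ'ne j j'), smul_zero, smul_zero]
  · intro j
    rw [ht]
    show ((p : ℤ) ^ ee j) • b (τ' j) ≠ 0
    intro hcon
    have h1 := (smul_b_zero_iff p b k hord (τ' j) _).1 hcon
    have h2 : ((p : ℕ) ^ (k (τ' j) + 1)) ∣ ((p : ℕ) ^ ee j) := by
      exact_mod_cast h1
    have h3 := (Nat.pow_dvd_pow_iff_le_right hp.one_lt).1 h2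
    have := hkτ j
    simp only [hee] at h3
    omega
  · intro x
    rcases hpG' x with ⟨N, hN⟩
    refine ⟨Finset.range N, ?_⟩
    intro j hj c hc
    have hjN : N ≤ j := by
      simp only [Finset.mem_range, not_lt] at hj
      exact hj
    have h1 : ((p : ℤ) ^ N * c) • b (s j) = 0 := by
      rw [mul_smul, ← hc, ← map_zsmul, hN, map_zero]
    have h2 := (smul_b_zero_iff p b k hord (s j) _).1 h1
    have h3 : ((p : ℤ) ^ (N + (j + 1))) ∣ ((p : ℤ) ^ N * c) := by
      refine dvd_trans (pow_dvd_pow _ ?_) h2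
      have := hks j
      omega
    have h4 : ((p : ℤ) ^ (j + 1)) ∣ c := dvd_cancel_pow p hpne N (j + 1) c h3
    exact hdvdt j c h4

end Cases

end CIproof

theorem finite_of_reduced_pGroup_all_completelyInert {G : Type*} [AddCommGroup G]
    (p : ℕ) (hp : p.Prime)
    (hpG : ∀ g : G, ∃ n : ℕ, p ^ n • g = 0)
    (hred : ∀ D : AddSubgroup G, DivisibleSub D → D = ⊥)
    (h : ∀ C : AddSubgroup G, CompletelyInert C) :
    Finite G := by
  by_contra hfin
  rw [not_finite_iff_infinite] at hfin
  have hpG' : ∀ g : G, ∃ n : ℕ, ((p : ℤ) ^ n) • g = 0 := by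
    intro g
    rcases hpG g with ⟨n, hn⟩
    refine ⟨n, ?_⟩
    rw [show ((p : ℤ) ^ n) = ((p ^ n : ℕ) : ℤ) by push_cast; ring, natCast_zsmul]
    exact hn
  rcases CIproof.exists_chain p hp hpG' hred hfin with ⟨b, K, k, hK0, hprops⟩
  rcases CIproof.exists_projections b K hK0
    (fun n => ⟨(hprops n).1, (hprops n).2.2.2.1, (hprops n).2.2.2.2.1,
      (hprops n).2.2.2.2.2⟩) with ⟨π, hπline0, hπb, hπδ⟩
  have hπline : ∀ n x, ∃ c : ℤ, π n x = c • b n := by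
    intro n x
    rcases AddSubgroup.mem_zmultiples_iff.1 (hπline0 n x) with ⟨c, hc⟩
    exact ⟨c, hc.symm⟩
  have hbne : ∀ n, b n ≠ 0 := fun n => (hprops n).2.1
  have hord : ∀ n, addOrderOf (b n) = p ^ (k n + 1) := fun n => (hprops n).2.2.1
  by_cases hcase : ∃ v, {n : ℕ | k n = v}.Infinite
  · obtain ⟨v, hv⟩ := hcase
    exact CIproof.caseB p hp hpG' b k π hbne hord hπline hπb hπδ h v hv
  · push_neg at hcase
    have hfib : ∀ v : ℕ, {n : ℕ | k n = v}.Finite := by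
      intro v
      rcases Set.finite_or_infinite {n : ℕ | k n = v} with hh | hh
      · exact hh
      · exact absurd hh (Set.not_infinite.2 (hcase v))
    exact CIproof.caseU p hp hpG' b k π hbne hord hπline hπb hπδ h hfib
end

section
/- If H is a subgroup of an abelian group G such that H contains no proper essential subgroup of itself, and H is essential in G, then H is a characteristic subgroup of G. -/
theorem characteristic_of_no_proper_essential {G : Type*} [AddCommGroup G] (H : AddSubgroup G)
    (hess : EssentialIn H)
    (hmin : ∀ K : AddSubgroup G, K ≤ H →
      (∀ A : AddSubgroup G, A ≤ H → A ≠ ⊥ → K ⊓ A ≠ ⊥) → K = H) :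
    CharacteristicSub H := by
  intro ψ
  set K : AddSubgroup G := H ⊓ H.map (ψ.symm : G →+ G) with hK
  have hKle : K ≤ H := inf_le_left
  have hKess : ∀ A : AddSubgroup G, A ≤ H → A ≠ ⊥ → K ⊓ A ≠ ⊥ := by
    intro A hAH hA
    have hA' : A.map (ψ : G →+ G) ≠ ⊥ := by
      intro h
      apply hA
      have := congrArg (fun S => AddSubgroup.map (ψ.symm : G →+ G) S) h
      simpa [AddSubgroup.map_map, AddSubgroup.map_bot] using this
    have h1 : H ⊓ A.map (ψ : G →+ G) ≠ ⊥ := hess _ hA'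
    rw [AddSubgroup.ne_bot_iff_exists_ne_zero] at h1 ⊢
    obtain ⟨⟨x, hxH, hxA⟩, hx0⟩ := h1
    obtain ⟨a, haA, rfl⟩ := hxA
    have ha0 : a ≠ 0 := by
      intro h
      apply hx0
      simp only [ne_eq, AddSubgroup.mk_eq_zero] at *
      simp [h]
    exact ⟨⟨a, ⟨⟨hAH haA, ⟨ψ a, hxH, by simp⟩⟩, haA⟩⟩, fun h => ha0 (congrArg Subtype.val h)⟩
  have hKH : K = H := hmin K hKle hKess
  have hle : H ≤ H.map (ψ.symm : G →+ G) := by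
    conv_lhs => rw [← hKH]
    exact inf_le_right
  intro x hx
  obtain ⟨y, hyH, hxy⟩ := hx
  obtain ⟨z, hzH, hz⟩ := hle hyH
  have : x = z := by
    have : ψ.symm z = y := hz
    subst hxy
    rw [← this]; simp
  rwa [this]
end

section
/- Let G be a torsion-free abelian group of finite rank and H a free essential subgroup of G (i.e., H is free abelian, of the same rank as G, and essential in G). Then H is completely inert in G. -/
lemma aux_relindex {G : Type*} [AddCommGroup G] (K S : AddSubgroup G)
    (hfin : Module.Finite ℤ ↥S)
    (h : ∀ x : G, x ∈ S → ∃ k : ℤ, k ≠ 0 ∧ k • x ∈ K) : K.relIndex S ≠ 0 := by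
  have hFG : AddGroup.FG ↥S := Module.Finite.iff_addGroup_fg.mp hfin
  have htor : AddMonoid.IsTorsion (↥S ⧸ K.addSubgroupOf S) := by
    intro q
    induction q using QuotientAddGroup.induction_on with
    | H x =>
      obtain ⟨k, hk0, hk⟩ := h x x.2
      rw [isOfFinAddOrder_iff_nsmul_eq_zero]
      refine ⟨k.natAbs, Int.natAbs_pos.mpr hk0, ?_⟩
      rw [← QuotientAddGroup.mk_nsmul, QuotientAddGroup.eq_zero_iff,
        AddSubgroup.mem_addSubgroupOf]
      have : ((k.natAbs • x : S) : G) = (k.natAbs : ℤ) • (x : G) := by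
        rw [natCast_zsmul]; norm_cast
      rw [this]
      rcases Int.natAbs_eq k with h' | h'
      · rw [← h']; exact hk
      · have : ((k.natAbs : ℤ)) = -k := by omega
        rw [this, neg_smul]; exact K.neg_mem hk
  have : Finite (↥S ⧸ K.addSubgroupOf S) := AddCommGroup.finite_of_fg_torsion _ htor
  exact AddSubgroup.index_ne_zero_of_finite

lemma ess_mul {G : Type*} [AddCommGroup G] {H : AddSubgroup G} (hess : EssentialIn H)
    {g : G} (hg : g ≠ 0) : ∃ k : ℤ, k ≠ 0 ∧ k • g ∈ H := by
  have hA : AddSubgroup.zmultiples g ≠ ⊥ := by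
    intro hbot
    have := AddSubgroup.mem_zmultiples g
    rw [hbot, AddSubgroup.mem_bot] at this
    exact hg this
  obtain ⟨⟨y, hy⟩, hy0⟩ := (AddSubgroup.ne_bot_iff_exists_ne_zero).mp (hess _ hA)
  have hy0 : y ≠ 0 := by simpa using hy0
  obtain ⟨hyH, hyA⟩ := AddSubgroup.mem_inf.mp hy
  obtain ⟨k, hk⟩ := AddSubgroup.mem_zmultiples_iff.mp hyA
  refine ⟨k, ?_, hk ▸ hyH⟩
  rintro rfl
  simp only [zero_smul] at hk
  exact hy0 hk.symm

theorem free_essential_completelyInert {G : Type*} [AddCommGroup G]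
    (htf : ∀ g : G, g ≠ 0 → ∀ n : ℕ, n ≠ 0 → n • g ≠ 0)
    (hrk : Module.rank ℤ G < Cardinal.aleph0)
    (H : AddSubgroup G) (hfree : Module.Free ℤ ↥H)
    (hrkeq : Module.rank ℤ ↥H = Module.rank ℤ G)
    (hess : EssentialIn H) :
    CompletelyInert H := by
  have hfinH : Module.Finite ℤ ↥H := by
    let b := Module.Free.chooseBasis ℤ ↥H
    have : Module.rank ℤ ↥H < Cardinal.aleph0 := hrkeq ▸ hrk
    obtain ⟨hf⟩ := b.nonempty_fintype_index_of_rank_lt_aleph0 this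
    exact Module.Finite.of_basis b
  intro ψ
  have hinj : Function.Injective (ψ : G →+ G) := ψ.injective
  have hfinM : Module.Finite ℤ ↥(H.map (ψ : G →+ G)) := by
    have e := AddSubgroup.equivMapOfInjective H (ψ : G →+ G) hinj
    exact Module.Finite.equiv e.toIntLinearEquiv
  constructor
  · refine aux_relindex _ _ hfinH ?_
    intro x hx
    by_cases hx0 : x = 0
    · exact ⟨1, one_ne_zero, by rw [hx0, smul_zero]; exact zero_mem _⟩
    · have hg : ψ.symm x ≠ 0 := by
        intro h'
        apply hx0
        have := congrArg ψ h'
        simpa using this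
      obtain ⟨k, hk0, hkH⟩ := ess_mul hess hg
      refine ⟨k, hk0, AddSubgroup.mem_inf.mpr ⟨H.zsmul_mem hx k, ?_⟩⟩
      refine AddSubgroup.mem_map.mpr ⟨k • ψ.symm x, hkH, ?_⟩
      simp [map_zsmul]
  · refine aux_relindex _ _ hfinM ?_
    intro x hx
    by_cases hx0 : x = 0
    · exact ⟨1, one_ne_zero, by rw [hx0, smul_zero]; exact zero_mem _⟩
    · obtain ⟨k, hk0, hkH⟩ := ess_mul hess hx0
      exact ⟨k, hk0, AddSubgroup.mem_inf.mpr ⟨hkH, (H.map _).zsmul_mem hx k⟩⟩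
end

section
/- If H is a nonzero torsion-free abelian group that is not divisible, then for some prime p and all n ≥ 1, the quotient H/pⁿH has cardinality at least pⁿ; consequently H cannot be uniformly totally inert as a subgroup of itself (taking the endomorphisms given by multiplication by pⁿ). -/
section Aux

variable {H : Type*} [AddCommGroup H]

lemma aux_cancel (htf : ∀ g : H, g ≠ 0 → ∀ n : ℕ, n ≠ 0 → n • g ≠ 0)
    {c : ℤ} (hc : c ≠ 0) {x y : H} (h : c • x = c • y) : x = y := by
  by_contra hxy
  have h0 : c • (x - y) = 0 := by rw [smul_sub, h, sub_self]
  have hna : (c.natAbs : ℤ) • (x - y) = 0 := by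
    rcases Int.natAbs_eq c with he | he
    · rw [← he]; exact h0
    · have : (c.natAbs : ℤ) = -c := by omega
      rw [this, neg_smul, h0, neg_zero]
  have := htf (x - y) (sub_ne_zero.mpr hxy) c.natAbs (Int.natAbs_ne_zero.mpr hc)
  rw [natCast_zsmul] at hna
  exact this hna

lemma aux_dvd_one (htf : ∀ g : H, g ≠ 0 → ∀ n : ℕ, n ≠ 0 → n • g ≠ 0)
    {p : ℕ} (hp : p.Prime) {a : H} (ha : ∀ h : H, (p : ℤ) • h ≠ a)
    {d : ℤ} {h : H} (hd : d • a = (p : ℤ) • h) : (p : ℤ) ∣ d := by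
  by_contra hnd
  have hnd' : ¬ p ∣ d.natAbs := by
    rw [← Int.natCast_dvd_natCast, Int.natCast_natAbs, dvd_abs]
    exact hnd
  have hcop : IsCoprime (p : ℤ) d := by
    rw [Int.isCoprime_iff_gcd_eq_one]
    have hg : Int.gcd (p : ℤ) d = Nat.gcd p d.natAbs := by simp [Int.gcd]
    rw [hg]
    exact hp.coprime_iff_not_dvd.mpr hnd'
  obtain ⟨u, v, huv⟩ := hcop
  have key : (p : ℤ) • (u • a + v • h) = (u * p + v * d) • a := by
    rw [add_smul, mul_smul, mul_smul, hd]
    module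
  rw [huv, one_smul] at key
  exact ha _ key

lemma aux_dvd (htf : ∀ g : H, g ≠ 0 → ∀ n : ℕ, n ≠ 0 → n • g ≠ 0)
    {p : ℕ} (hp : p.Prime) {a : H} (ha : ∀ h : H, (p : ℤ) • h ≠ a) :
    ∀ (n : ℕ) (d : ℤ) (h : H), d • a = ((p : ℤ) ^ n) • h → ((p : ℤ) ^ n) ∣ d := by
  intro n
  induction n with
  | zero => intro d h _; simp
  | succ n ih =>
    intro d h hd
    have h1 : d • a = ((p : ℤ) ^ n) • ((p : ℤ) • h) := by
      rw [smul_smul, ← pow_succ, hd]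
    obtain ⟨e, he⟩ := ih d ((p : ℤ) • h) h1
    have hpn : ((p : ℤ) ^ n) ≠ 0 := pow_ne_zero _ (by exact_mod_cast hp.ne_zero)
    have h2 : ((p : ℤ) ^ n) • (e • a) = ((p : ℤ) ^ n) • ((p : ℤ) • h) := by
      rw [smul_smul, ← he, h1]
    have h3 : e • a = (p : ℤ) • h := aux_cancel htf hpn h2
    obtain ⟨f, hf⟩ := aux_dvd_one htf hp ha h3
    exact ⟨f, by rw [he, hf, pow_succ]; ring⟩

end Aux


def UnifTotallyInert {G : Type*} [AddCommGroup G] (T : AddSubgroup G) : Prop :=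
  ∃ n : ℕ, 0 < n ∧ ∀ φ : G →+ G, φ ≠ 0 →
    (0 < (T ⊓ T.map φ).relIndex T ∧ (T ⊓ T.map φ).relIndex T ≤ n) ∧
    (0 < (T ⊓ T.map φ).relIndex (T.map φ) ∧ (T ⊓ T.map φ).relIndex (T.map φ) ≤ n)

theorem not_unifTotallyInert_of_not_divisible {H : Type*} [AddCommGroup H] [Nontrivial H]
    (htf : ∀ g : H, g ≠ 0 → ∀ n : ℕ, n ≠ 0 → n • g ≠ 0)
    (hnd : ∃ p : ℕ, p.Prime ∧ AddSubgroup.map (zsmulAddGroupHom (p : ℤ)) ⊤ ≠ (⊤ : AddSubgroup H)) :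
    (∃ p : ℕ, p.Prime ∧ ∀ n : ℕ, 1 ≤ n →
      (p ^ n : Cardinal) ≤
        Cardinal.mk (H ⧸ AddSubgroup.map (zsmulAddGroupHom ((p : ℤ) ^ n)) ⊤)) ∧
    ¬ UnifTotallyInert (⊤ : AddSubgroup H) := by
  obtain ⟨p, hp, hne⟩ := hnd
  have hex : ∃ a : H, ∀ h : H, (p : ℤ) • h ≠ a := by
    by_contra hc
    push_neg at hc
    apply hne
    ext x
    simp only [AddSubgroup.mem_map, AddSubgroup.mem_top, true_and, zsmulAddGroupHom_apply,
      iff_true]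
    obtain ⟨h, hh⟩ := hc x
    exact ⟨h, hh⟩
  obtain ⟨a, ha⟩ := hex
  have key : ∀ n : ℕ, 1 ≤ n → ((p : Cardinal) ^ n) ≤
      Cardinal.mk (H ⧸ AddSubgroup.map (zsmulAddGroupHom ((p : ℤ) ^ n)) ⊤) := by
    intro n _
    set K := AddSubgroup.map (zsmulAddGroupHom ((p : ℤ) ^ n)) (⊤ : AddSubgroup H) with hK
    have hinj : Function.Injective (fun k : ULift.{_, 0} (Fin (p ^ n)) =>
        (QuotientAddGroup.mk (((k.down : ℕ) : ℤ) • a) : H ⧸ K)) := by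
      intro k l hkl
      simp only at hkl
      rw [QuotientAddGroup.eq] at hkl
      rw [hK] at hkl
      obtain ⟨h, -, hh⟩ := hkl
      rw [zsmulAddGroupHom_apply] at hh
      have hda : (((l.down : ℕ) : ℤ) - ((k.down : ℕ) : ℤ)) • a = ((p : ℤ) ^ n) • h := by
        rw [sub_smul, hh]; abel
      have hdvd := aux_dvd htf hp ha n _ h hda
      have hdvd' : (p ^ n : ℕ) ∣ (((l.down : ℕ) : ℤ) - ((k.down : ℕ) : ℤ)).natAbs := by
        rw [← Int.natCast_dvd_natCast, Int.natCast_natAbs, dvd_abs]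
        exact_mod_cast hdvd
      have hlt : (((l.down : ℕ) : ℤ) - ((k.down : ℕ) : ℤ)).natAbs < p ^ n := by
        have h1 : (k.down : ℕ) < p ^ n := k.down.isLt
        have h2 : (l.down : ℕ) < p ^ n := l.down.isLt
        omega
      have h0 : (((l.down : ℕ) : ℤ) - ((k.down : ℕ) : ℤ)).natAbs = 0 :=
        Nat.eq_zero_of_dvd_of_lt hdvd' hlt
      have : ((k.down : ℕ) : ℤ) = ((l.down : ℕ) : ℤ) := by omega
      have : (k.down : ℕ) = (l.down : ℕ) := by exact_mod_cast this
      exact ULift.ext _ _ (Fin.ext this)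
    have hle := Cardinal.mk_le_of_injective hinj
    calc ((p : Cardinal) ^ n) = Cardinal.mk (ULift.{_, 0} (Fin (p ^ n))) := by
          rw [Cardinal.mk_uLift, Cardinal.mk_fin, Cardinal.lift_natCast, Nat.cast_pow]
      _ ≤ _ := hle
  refine ⟨⟨p, hp, key⟩, ?_⟩
  rintro ⟨n, hn, hall⟩
  set φ : H →+ H := zsmulAddGroupHom ((p : ℤ) ^ n) with hφdef
  have hpn : (p ^ n : ℕ) ≠ 0 := pow_ne_zero _ hp.ne_zero
  have hφ : φ ≠ 0 := by
    intro h0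
    obtain ⟨g, hg⟩ := exists_ne (0 : H)
    apply htf g hg (p ^ n) hpn
    have h1 : φ g = 0 := by rw [h0]; rfl
    rw [hφdef, zsmulAddGroupHom_apply] at h1
    rw [← natCast_zsmul]
    push_cast
    exact h1
  obtain ⟨⟨hpos, hle⟩, -⟩ := hall φ hφ
  rw [top_inf_eq, AddSubgroup.relIndex_top_right] at hpos hle
  have hcard := key n hn
  set Q := H ⧸ AddSubgroup.map φ ⊤ with hQ
  have hfin : Finite Q := (Nat.card_ne_zero.mp hpos.ne').2
  have hlt : Cardinal.mk Q < Cardinal.aleph0 := Cardinal.lt_aleph0_of_finite Q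
  have hmk : ((Nat.card Q : ℕ) : Cardinal) = Cardinal.mk Q :=
    Cardinal.cast_toNat_of_lt_aleph0 hlt
  have hcard' : ((p ^ n : ℕ) : Cardinal) ≤ ((Nat.card Q : ℕ) : Cardinal) := by
    rw [hmk, Nat.cast_pow]
    exact hcard
  have hfinal : p ^ n ≤ Nat.card Q := by exact_mod_cast hcard'
  have hidx : (AddSubgroup.map φ (⊤ : AddSubgroup H)).index = Nat.card Q := rfl
  have : n < p ^ n := Nat.lt_pow_self (n := n) hp.one_lt
  omega
end
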